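/- arXiv:2405.14540 — 9 statements merged into one kernel-verified Lean document; each statement's English description precedes it below -/
import Mathlib

section
/- Let n ≥ 2 and let A be a symmetric positive definite real n×n matrix, written in block form A = [[a₁₁, a₁ᵀ],[a₁, Ã]] where a₁₁ ∈ ℝ, a₁ ∈ ℝ^{n−1} and Ã is the (n−1)×(n−1) submatrix of A obtained by deleting the first row and column. Then for every v ∈ ℝⁿ, writing ṽ ∈ ℝ^{n−1} for its last n−1 coordinates, one has ṽᵀÃ⁻¹ṽ ≤ vᵀA⁻¹v. In particular, taking A = Δ (a positive definite covariance matrix) this shows that deleting an observation cannot decrease the Gaussian-process posterior variance. -/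
/-!
For positive definite `A`, completing the square gives `2 u ⬝ v - u ⬝ A u ≤ v ⬝ A⁻¹ v`, with
equality at `u = A⁻¹ v`; so `v ⬝ A⁻¹ v` is the maximum of `2 u ⬝ v - u ⬝ A u` over all `u`.
Maximising only over `u = P w` yields `(Pᵀ v) ⬝ (Pᵀ A P)⁻¹ (Pᵀ v)`, which is therefore smaller.
Deleting coordinates is the case where `P` is the inclusion of the kept coordinates, for which
`Pᵀ A P` is the principal submatrix.
-/

open Matrix

namespace Matrix

section Compression

variable {ι κ : Type*} [Fintype ι] [DecidableEq ι] [Fintype κ] [DecidableEq κ]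

theorem PosDef.two_mul_dotProduct_sub_le_dotProduct_inv_mulVec {A : Matrix ι ι ℝ}
    (hA : A.PosDef) (u v : ι → ℝ) :
    2 * (u ⬝ᵥ v) - u ⬝ᵥ A *ᵥ u ≤ v ⬝ᵥ A⁻¹ *ᵥ v := by
  set z := A⁻¹ *ᵥ v
  have hAz : A *ᵥ z = v := by
    rw [mulVec_mulVec, mul_nonsing_inv A (isUnit_iff_ne_zero.2 hA.det_pos.ne'), one_mulVec]
  have hzAu : z ⬝ᵥ A *ᵥ u = u ⬝ᵥ v := by
    rw [← hA.isHermitian.eq, conjTranspose_eq_transpose_of_trivial, dotProduct_transpose_mulVec,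
      hAz]
  have hsquare : (u - z) ⬝ᵥ A *ᵥ (u - z) = u ⬝ᵥ A *ᵥ u - 2 * (u ⬝ᵥ v) + v ⬝ᵥ z := by
    rw [mulVec_sub, sub_dotProduct, dotProduct_sub, dotProduct_sub, hzAu, hAz, dotProduct_comm z v]
    ring
  have hnonneg := hA.posSemidef.dotProduct_mulVec_nonneg (u - z)
  rw [star_trivial] at hnonneg
  linarith

theorem PosDef.transpose_mulVec_dotProduct_inv_mulVec_le {A : Matrix ι ι ℝ} (hA : A.PosDef)
    (P : Matrix ι κ ℝ) (hP : IsUnit (Pᵀ * A * P).det) (v : ι → ℝ) :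
    (Pᵀ *ᵥ v) ⬝ᵥ (Pᵀ * A * P)⁻¹ *ᵥ (Pᵀ *ᵥ v) ≤ v ⬝ᵥ A⁻¹ *ᵥ v := by
  set y := Pᵀ *ᵥ v
  set w := (Pᵀ * A * P)⁻¹ *ᵥ y
  have hv : (P *ᵥ w) ⬝ᵥ v = y ⬝ᵥ w := by
    rw [dotProduct_comm, ← dotProduct_transpose_mulVec, dotProduct_comm]
  have hquad : (P *ᵥ w) ⬝ᵥ A *ᵥ (P *ᵥ w) = y ⬝ᵥ w := by
    rw [dotProduct_comm, ← dotProduct_transpose_mulVec, mulVec_mulVec, mulVec_mulVec,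
      mulVec_mulVec, mul_nonsing_inv _ hP, one_mulVec, dotProduct_comm]
  linarith [hA.two_mul_dotProduct_sub_le_dotProduct_inv_mulVec (P *ᵥ w) v]

end Compression

section Inclusion

variable {R ι κ : Type*} [NonAssocSemiring R] [Fintype ι] [DecidableEq ι]

theorem transpose_one_submatrix_mul_mul_one_submatrix (A : Matrix ι ι R) (e : κ → ι) :
    ((1 : Matrix ι ι R).submatrix id e)ᵀ * A * (1 : Matrix ι ι R).submatrix id e
      = A.submatrix e e := by
  ext i j
  simp [mul_apply, one_apply]

theorem transpose_one_submatrix_mulVec (v : ι → R) (e : κ → ι) :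
    ((1 : Matrix ι ι R).submatrix id e)ᵀ *ᵥ v = v ∘ e := by
  ext i
  simp [mulVec, dotProduct, one_apply]

end Inclusion

theorem PosDef.comp_dotProduct_submatrix_inv_mulVec_le {ι κ : Type*} [Fintype ι] [DecidableEq ι]
    [Fintype κ] [DecidableEq κ] {A : Matrix ι ι ℝ} (hA : A.PosDef) {e : κ → ι}
    (he : Function.Injective e) (v : ι → ℝ) :
    (v ∘ e) ⬝ᵥ (A.submatrix e e)⁻¹ *ᵥ (v ∘ e) ≤ v ⬝ᵥ A⁻¹ *ᵥ v := by
  have hdet : IsUnit (A.submatrix e e).det := isUnit_iff_ne_zero.2 (hA.submatrix he).det_pos.ne'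
  rw [← transpose_one_submatrix_mul_mul_one_submatrix] at hdet ⊢
  rw [← transpose_one_submatrix_mulVec]
  exact hA.transpose_mulVec_dotProduct_inv_mulVec_le _ hdet v

end Matrix

theorem stmt_0_general (n : ℕ)
    (A : Matrix (Fin (n + 1)) (Fin (n + 1)) ℝ) (hA : A.PosDef)
    (v : Fin (n + 1) → ℝ) :
    (fun i : Fin n => v i.succ) ⬝ᵥ (A.submatrix Fin.succ Fin.succ)⁻¹ *ᵥ
        (fun i : Fin n => v i.succ)
      ≤ v ⬝ᵥ A⁻¹ *ᵥ v :=
  hA.comp_dotProduct_submatrix_inv_mulVec_le (Fin.succ_injective n) v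

/-- Deleting the first observation cannot decrease the quadratic form with the inverse
covariance matrix: for a symmetric positive definite `A` of size `n + 1 ≥ 2`, and any
vector `v`, the quadratic form of the last `n` coordinates of `v` with the inverse of the
lower-right principal submatrix of `A` is at most the quadratic form of `v` with `A⁻¹`. -/
theorem stmt_0 (n : ℕ) (hn : 1 ≤ n)
    (A : Matrix (Fin (n + 1)) (Fin (n + 1)) ℝ) (hA : A.PosDef)
    (v : Fin (n + 1) → ℝ) :
    (fun i : Fin n => v i.succ) ⬝ᵥ (A.submatrix Fin.succ Fin.succ)⁻¹ *ᵥ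
        (fun i : Fin n => v i.succ)
      ≤ v ⬝ᵥ A⁻¹ *ᵥ v :=
  stmt_0_general n A hA v
end

section
/- For every (x,t) ∈ ℝ^d × ℝ, the difference of posterior means satisfies μ_D(x,t) − μ_D̃(x,t) = a·k((x,t),(x₁,t₁)) + Σ_{j=2}^{n} b_j·k((x,t),(x_j,t_j)), where a = E·y₁ + G·ỹ ∈ ℝ and b ∈ ℝ^{n−1} is defined by bᵀ = y₁·Hᵀ + ỹᵀ(F − Δ̃⁻¹). -/
/-!
Write `Δ` as the bordered matrix `[[λ + σ², k₁ᵀ], [k₁, Δ̃]]`. Then `E`, `G`, `H`, `F` are exactly the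
four blocks of `Δ⁻¹`; the two Schur complements `E⁻¹` and `F⁻¹` are invertible because a kernel
vector of either one extends to a kernel vector of `Δ`, and the block formula is checked by
multiplying out. Expanding `κᵀΔ⁻¹y` blockwise and subtracting `κ̃ᵀΔ̃⁻¹ỹ` gives the claim, once the
symmetry of `F` and `Δ̃⁻¹` turns `ỹᵀ(F - Δ̃⁻¹)` into `(F - Δ̃⁻¹)ỹ`.
-/

open Matrix

namespace Matrix

section Bordered

variable {R : Type*} {n : ℕ}

/-- The block matrix `[[a, rᵀ], [c, D]]` with a `1 × 1` upper left corner. -/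
def bordered (a : R) (r c : Fin n → R) (D : Matrix (Fin n) (Fin n) R) :
    Matrix (Fin (n + 1)) (Fin (n + 1)) R :=
  of (vecCons (vecCons a r) fun i => vecCons (c i) (D i))

theorem eq_bordered (M : Matrix (Fin (n + 1)) (Fin (n + 1)) R) :
    M = bordered (M 0 0) (fun j => M 0 j.succ) (fun i => M i.succ 0)
      (M.submatrix Fin.succ Fin.succ) := by
  ext i j
  cases i using Fin.cases <;> cases j using Fin.cases <;> rfl

theorem bordered_one [Zero R] [One R] : bordered (1 : R) 0 0 (1 : Matrix (Fin n) (Fin n) R) = 1 := by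
  ext i j
  cases i using Fin.cases <;> cases j using Fin.cases <;>
    simp [bordered, one_apply, Fin.succ_ne_zero, (Fin.succ_ne_zero _).symm]

variable [CommSemiring R] {a : R} {r c : Fin n → R} {D : Matrix (Fin n) (Fin n) R}

theorem bordered_mulVec (w : Fin (n + 1) → R) :
    bordered a r c D *ᵥ w =
      vecCons (a * w 0 + r ⬝ᵥ fun j => w j.succ) (w 0 • c + D *ᵥ fun j => w j.succ) := by
  ext i
  cases i using Fin.cases <;>
    simp [bordered, mulVec, vecHead, vecTail, Function.comp_def, mul_comm]

theorem bordered_mulVec_vecCons (x : R) (z : Fin n → R) :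
    bordered a r c D *ᵥ vecCons x z = vecCons (a * x + r ⬝ᵥ z) (x • c + D *ᵥ z) := by
  simp [bordered_mulVec]

theorem bordered_mul_bordered (b : R) (s d : Fin n → R) (P : Matrix (Fin n) (Fin n) R) :
    bordered a r c D * bordered b s d P =
      bordered (a * b + r ⬝ᵥ d) (a • s + r ᵥ* P) (b • c + D *ᵥ d) (vecMulVec c s + D * P) := by
  ext i j
  cases i using Fin.cases <;> cases j using Fin.cases <;>
    simp [bordered, mul_apply, Fin.sum_univ_succ, vecMul, mulVec, dotProduct, vecMulVec_apply,
      mul_comm]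

end Bordered

section Inverse

variable {K : Type*} [Field K] {n : ℕ} {a : K} {r c : Fin n → K} {D : Matrix (Fin n) (Fin n) K}

theorem sub_dotProduct_inv_mulVec_ne_zero_of_isUnit_bordered (hM : IsUnit (bordered a r c D))
    (hD : IsUnit D) : a - r ⬝ᵥ D⁻¹ *ᵥ c ≠ 0 := by
  intro hs
  have hker : bordered a r c D *ᵥ vecCons 1 (-(D⁻¹ *ᵥ c)) = bordered a r c D *ᵥ 0 := by
    rw [bordered_mulVec_vecCons, mulVec_zero, dotProduct_neg, mul_one, ← sub_eq_add_neg, hs,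
      mulVec_neg, mulVec_mulVec, mul_nonsing_inv _ ((isUnit_iff_isUnit_det D).mp hD), one_mulVec,
      one_smul, add_neg_cancel, ← cons_zero_zero]
  simpa using congrFun (mulVec_injective_iff_isUnit.mpr hM hker) 0

theorem isUnit_sub_smul_vecMulVec_of_isUnit_bordered (hM : IsUnit (bordered a r c D))
    (ha : a ≠ 0) : IsUnit (D - a⁻¹ • vecMulVec c r) := by
  have hcons (z : Fin n → K) : bordered a r c D *ᵥ vecCons (-(a⁻¹ * (r ⬝ᵥ z))) z =
      vecCons 0 ((D - a⁻¹ • vecMulVec c r) *ᵥ z) := by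
    rw [bordered_mulVec_vecCons, sub_mulVec, smul_mulVec, vecMulVec_mulVec, op_smul_eq_smul,
      smul_smul, neg_smul, neg_add_eq_sub, mul_neg, mul_inv_cancel_left₀ ha, neg_add_cancel]
  refine mulVec_injective_iff_isUnit.mp fun z w h => ?_
  exact (Fin.cons_injective2 <|
    mulVec_injective_iff_isUnit.mpr hM <| (hcons z).trans (h ▸ (hcons w).symm)).2

/-- Each block of the inverse is written with whichever Schur complement makes it simplest. -/
theorem inv_bordered (hM : IsUnit (bordered a r c D)) (ha : a ≠ 0) (hD : IsUnit D) :
    (bordered a r c D)⁻¹ =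
      bordered (a - r ⬝ᵥ D⁻¹ *ᵥ c)⁻¹ (-((a - r ⬝ᵥ D⁻¹ *ᵥ c)⁻¹ • (r ᵥ* D⁻¹)))
        (-(a⁻¹ • ((D - a⁻¹ • vecMulVec c r)⁻¹ *ᵥ c))) (D - a⁻¹ • vecMulVec c r)⁻¹ := by
  have hs := sub_dotProduct_inv_mulVec_ne_zero_of_isUnit_bordered hM hD
  have hN := (isUnit_iff_isUnit_det _).mp (isUnit_sub_smul_vecMulVec_of_isUnit_bordered hM ha)
  replace hD := (isUnit_iff_isUnit_det D).mp hD
  set s := a - r ⬝ᵥ D⁻¹ *ᵥ c with hs_def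
  set N := D - a⁻¹ • vecMulVec c r with hN_def
  have hDc : D *ᵥ (D⁻¹ *ᵥ c) = c := by rw [mulVec_mulVec, mul_nonsing_inv _ hD, one_mulVec]
  have hrD : (r ᵥ* D⁻¹) ᵥ* D = r := by rw [vecMul_vecMul, nonsing_inv_mul _ hD, vecMul_one]
  have hrDc : r ⬝ᵥ D⁻¹ *ᵥ c = a - s := by rw [hs_def]; ring
  have hcoeff : a * s⁻¹ - a⁻¹ * (a * s⁻¹ * (a - s)) = 1 := by field_simp; ring
  have hFc : N⁻¹ *ᵥ c = (a * s⁻¹) • (D⁻¹ *ᵥ c) := by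
    suffices N *ᵥ ((a * s⁻¹) • (D⁻¹ *ᵥ c)) = c by
      conv_lhs => rw [← this]
      rw [mulVec_mulVec, nonsing_inv_mul _ hN, one_mulVec]
    rw [hN_def, sub_mulVec, smul_mulVec, vecMulVec_mulVec, op_smul_eq_smul, mulVec_smul, hDc,
      dotProduct_smul, hrDc, smul_eq_mul, smul_smul, ← sub_smul, hcoeff, one_smul]
  have hrF : r ᵥ* N⁻¹ = (a * s⁻¹) • (r ᵥ* D⁻¹) := by
    suffices ((a * s⁻¹) • (r ᵥ* D⁻¹)) ᵥ* N = r by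
      conv_lhs => rw [← this]
      rw [vecMul_vecMul, mul_nonsing_inv _ hN, vecMul_one]
    rw [hN_def, vecMul_sub, vecMul_smul, vecMul_vecMulVec, smul_vecMul, hrD, smul_dotProduct,
      ← dotProduct_mulVec, hrDc, smul_eq_mul, smul_smul, ← sub_smul, hcoeff, one_smul]
  have hDF : D * N⁻¹ = 1 + s⁻¹ • vecMulVec c (r ᵥ* D⁻¹) := by
    have hsplit : D = N + a⁻¹ • vecMulVec c r := by rw [hN_def]; abel
    rw [hsplit, add_mul, mul_nonsing_inv _ hN, ← hsplit, smul_mul, vecMulVec_mul, hrF,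
      vecMulVec_smul, smul_smul, inv_mul_cancel_left₀ ha]
  apply inv_eq_right_inv
  rw [bordered_mul_bordered, ← bordered_one]
  congr 1
  · rw [dotProduct_neg, dotProduct_smul, hFc, dotProduct_smul, hrDc, smul_eq_mul, smul_eq_mul,
      ← sub_eq_add_neg]
    exact hcoeff
  · rw [hrF, smul_neg, smul_smul, neg_add_cancel]
  · rw [mulVec_neg, mulVec_smul, hFc, mulVec_smul, hDc, smul_smul, inv_mul_cancel_left₀ ha,
      add_neg_cancel]
  · rw [hDF, vecMulVec_neg, vecMulVec_smul]
    abel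

end Inverse

end Matrix

theorem stmt_2_general
    (d n : ℕ)
    (lam sig : ℝ)
    (kS kT : ℝ → ℝ)
    (hkS0 : kS 0 = 1) (hkT0 : kT 0 = 1)
    (k : (EuclideanSpace ℝ (Fin d) × ℝ) → (EuclideanSpace ℝ (Fin d) × ℝ) → ℝ)
    (hk : ∀ p q, k p q = lam * kS (‖p.1 - q.1‖) * kT (|p.2 - q.2|))
    (pts : Fin (n + 1) → EuclideanSpace ℝ (Fin d) × ℝ)
    (y : Fin (n + 1) → ℝ)
    (Δ : Matrix (Fin (n + 1)) (Fin (n + 1)) ℝ)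
    (hΔ : ∀ i j, Δ i j = k (pts i) (pts j) + sig ^ 2 * (if i = j then 1 else 0))
    (hPD : Δ.PosDef)
    (Δt : Matrix (Fin n) (Fin n) ℝ)
    (hΔt : Δt = Δ.submatrix Fin.succ Fin.succ)
    (k1 : Fin n → ℝ)
    (hk1 : ∀ j : Fin n, k1 j = k (pts 0) (pts j.succ))
    (E : ℝ) (hE : E = (lam + sig ^ 2 - k1 ⬝ᵥ Δt⁻¹ *ᵥ k1)⁻¹)
    (F : Matrix (Fin n) (Fin n) ℝ)
    (hF : F = (Δt - (lam + sig ^ 2)⁻¹ • vecMulVec k1 k1)⁻¹)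
    (G : Fin n → ℝ) (hG : G = -(E • (k1 ᵥ* Δt⁻¹)))
    (H : Fin n → ℝ) (hH : H = -((lam + sig ^ 2)⁻¹ • (F *ᵥ k1)))
    (μD μDt : (EuclideanSpace ℝ (Fin d) × ℝ) → ℝ)
    (hμD : ∀ p, μD p = (fun i : Fin (n + 1) => k p (pts i)) ⬝ᵥ Δ⁻¹ *ᵥ y)
    (hμDt : ∀ p, μDt p =
      (fun j : Fin n => k p (pts j.succ)) ⬝ᵥ Δt⁻¹ *ᵥ (fun j : Fin n => y j.succ))
    (a : ℝ) (ha : a = E * y 0 + G ⬝ᵥ (fun j : Fin n => y j.succ))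
    (b : Fin n → ℝ)
    (hb : b = y 0 • H + (fun j : Fin n => y j.succ) ᵥ* (F - Δt⁻¹)) :
    ∀ p : EuclideanSpace ℝ (Fin d) × ℝ,
      μD p - μDt p = a * k p (pts 0) + ∑ j : Fin n, b j * k p (pts j.succ) := by
  intro p
  subst hE hF hG hH ha hb
  set α := lam + sig ^ 2
  have hcorner : Δ 0 0 = α := by rw [hΔ, hk]; simp [α, hkS0, hkT0]
  have hrow : (fun j : Fin n => Δ 0 j.succ) = k1 :=
    funext fun j => by rw [hΔ, hk1]; simp [(Fin.succ_ne_zero j).symm]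
  have hΔsymm : Δ.IsSymm := isHermitian_iff_isSymm.mp hPD.isHermitian
  have hcol : (fun i : Fin n => Δ i.succ 0) = k1 := funext fun i => by
    rw [hΔsymm.apply]; exact congrFun hrow i
  have hΔ_eq : Δ = bordered α k1 k1 Δt := by
    conv_lhs => rw [eq_bordered Δ]
    rw [hcorner, hrow, hcol, hΔt]
  have hΔtPD : Δt.PosDef := hΔt ▸ hPD.submatrix (Fin.succ_injective n)
  have hΔtsymm : Δt.IsSymm := isHermitian_iff_isSymm.mp hΔtPD.isHermitian
  have hvecMul : (fun j => y j.succ) ᵥ* ((Δt - α⁻¹ • vecMulVec k1 k1)⁻¹ - Δt⁻¹) =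
      (Δt - α⁻¹ • vecMulVec k1 k1)⁻¹ *ᵥ (fun j => y j.succ) - Δt⁻¹ *ᵥ fun j => y j.succ := by
    rw [← sub_mulVec, ← vecMul_transpose,
      ((hΔtsymm.sub (IsSymm.smul (transpose_vecMulVec k1 k1) _)).inv.sub hΔtsymm.inv).eq]
  have hsum (v : Fin n → ℝ) : ∑ j, v j * k p (pts j.succ) = (fun j => k p (pts j.succ)) ⬝ᵥ v :=
    dotProduct_comm _ _
  rw [hμD, hμDt, hΔ_eq, inv_bordered (hΔ_eq ▸ hPD.isUnit) (hcorner ▸ hPD.diag_pos.ne')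
    hΔtPD.isUnit, bordered_mulVec, dotProduct_cons, hvecMul, hsum, dotProduct_add,
    dotProduct_add, dotProduct_sub]
  simp only [vecHead, vecTail, Function.comp_def]
  ring

/-- Proposition 1 of the paper: the difference of posterior means after removing the first
observation is `a·k((x,t),(x₁,t₁)) + Σⱼ bⱼ·k((x,t),(xⱼ,tⱼ))`. -/
theorem stmt_2
    (d n : ℕ) (hd : 1 ≤ d) (hn : 1 ≤ n)
    (lam sig : ℝ) (hlam : 0 < lam) (hsig : 0 < sig)
    (kS kT : ℝ → ℝ)
    (hkSmeas : Measurable kS) (hkTmeas : Measurable kT)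
    (hkSrange : ∀ r, kS r ∈ Set.Icc (0 : ℝ) 1) (hkTrange : ∀ r, kT r ∈ Set.Icc (0 : ℝ) 1)
    (hkS0 : kS 0 = 1) (hkT0 : kT 0 = 1)
    (k : (EuclideanSpace ℝ (Fin d) × ℝ) → (EuclideanSpace ℝ (Fin d) × ℝ) → ℝ)
    (hk : ∀ p q, k p q = lam * kS (‖p.1 - q.1‖) * kT (|p.2 - q.2|))
    (pts : Fin (n + 1) → EuclideanSpace ℝ (Fin d) × ℝ)
    (y : Fin (n + 1) → ℝ)
    (Δ : Matrix (Fin (n + 1)) (Fin (n + 1)) ℝ)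
    (hΔ : ∀ i j, Δ i j = k (pts i) (pts j) + sig ^ 2 * (if i = j then 1 else 0))
    (hPD : Δ.PosDef)
    (Δt : Matrix (Fin n) (Fin n) ℝ)
    (hΔt : Δt = Δ.submatrix Fin.succ Fin.succ)
    (k1 : Fin n → ℝ)
    (hk1 : ∀ j : Fin n, k1 j = k (pts 0) (pts j.succ))
    (E : ℝ) (hE : E = (lam + sig ^ 2 - k1 ⬝ᵥ Δt⁻¹ *ᵥ k1)⁻¹)
    (F : Matrix (Fin n) (Fin n) ℝ)
    (hF : F = (Δt - (lam + sig ^ 2)⁻¹ • vecMulVec k1 k1)⁻¹)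
    (G : Fin n → ℝ) (hG : G = -(E • (k1 ᵥ* Δt⁻¹)))
    (H : Fin n → ℝ) (hH : H = -((lam + sig ^ 2)⁻¹ • (F *ᵥ k1)))
    (μD μDt : (EuclideanSpace ℝ (Fin d) × ℝ) → ℝ)
    (hμD : ∀ p, μD p = (fun i : Fin (n + 1) => k p (pts i)) ⬝ᵥ Δ⁻¹ *ᵥ y)
    (hμDt : ∀ p, μDt p =
      (fun j : Fin n => k p (pts j.succ)) ⬝ᵥ Δt⁻¹ *ᵥ (fun j : Fin n => y j.succ))
    (a : ℝ) (ha : a = E * y 0 + G ⬝ᵥ (fun j : Fin n => y j.succ))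
    (b : Fin n → ℝ)
    (hb : b = y 0 • H + (fun j : Fin n => y j.succ) ᵥ* (F - Δt⁻¹)) :
    ∀ p : EuclideanSpace ℝ (Fin d) × ℝ,
      μD p - μDt p = a * k p (pts 0) + ∑ j : Fin n, b j * k p (pts j.succ) :=
  stmt_2_general d n lam sig kS kT hkS0 hkT0 k hk pts y Δ hΔ hPD Δt hΔt k1 hk1 E hE F hF G hG H hH
    μD μDt hμD hμDt a ha b hb
end

section
/- For every (x,t) ∈ ℝ^d × ℝ, the difference of posterior standard deviations satisfies (σ_D(x,t) − σ_D̃(x,t))² ≤ E·k((x,t),(x₁,t₁))² + k((x,t),(x₁,t₁))·Σ_{j=2}^{n} c_j·k((x,t),(x_j,t_j)) + κ̃(x,t)ᵀ M κ̃(x,t), where c ∈ ℝ^{n−1} is defined by cᵀ = G + Hᵀ and M = F − Δ̃⁻¹. -/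
/-!
Write `Δ` as the bordered matrix `[[α, k₁ᵀ], [k₁, Δ̃]]` with `α = λ + σ²`. Its Schur complement
`S = α - k₁ᵀ Δ̃⁻¹ k₁` is positive because `Δ` is positive definite, and `E = S⁻¹`. Solving
`Δ w = (a, b)` blockwise gives `(a, b)ᵀ Δ⁻¹ (a, b) = bᵀ Δ̃⁻¹ b + E (a - k₁ᵀ Δ̃⁻¹ b)²`, so
`σ²_D̃ - σ²_D = E (a - k₁ᵀ Δ̃⁻¹ b)² ≥ 0` for `a = k(p, p₁)` and `b = κ̃(p)`. By Sherman–Morrison,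
`F = Δ̃⁻¹ + E u uᵀ` with `u = Δ̃⁻¹ k₁`, hence `G = H = -E u`, and the right-hand side is the same
square. It remains that `(√x - √y)² ≤ y - x` for all reals `x ≤ y`, `√` being `0` on negatives.
-/

open Matrix

theorem Real.sqrt_sub_sqrt_sq_le {a b : ℝ} (hab : a ≤ b) : (√a - √b) ^ 2 ≤ b - a := by
  rcases le_total 0 a with ha | ha
  · have hsqrt : √a ≤ √b := Real.sqrt_le_sqrt hab
    nlinarith [Real.sq_sqrt ha, Real.sq_sqrt (ha.trans hab), Real.sqrt_nonneg a]
  · rw [Real.sqrt_eq_zero_of_nonpos ha, zero_sub, neg_sq]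
    rcases le_total 0 b with hb | hb
    · rw [Real.sq_sqrt hb]
      linarith
    · rw [Real.sqrt_eq_zero_of_nonpos hb]
      linarith

namespace Matrix

section Bordered

variable {R : Type*} {n : ℕ}

def borderedMatrix (α : R) (r : Fin n → R) (D : Matrix (Fin n) (Fin n) R) :
    Matrix (Fin (n + 1)) (Fin (n + 1)) R :=
  of (vecCons (vecCons α r) fun i => vecCons (r i) (D i))

theorem borderedMatrix_mulVec_vecCons [CommSemiring R] (α : R) (r : Fin n → R)
    (D : Matrix (Fin n) (Fin n) R) (x : R) (v : Fin n → R) :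
    borderedMatrix α r D *ᵥ vecCons x v = vecCons (α * x + r ⬝ᵥ v) (x • r + D *ᵥ v) := by
  ext i
  induction i using Fin.cases <;>
    simp [borderedMatrix, mulVec, dotProduct, Fin.sum_univ_succ, mul_comm]

@[simp]
theorem submatrix_succ_borderedMatrix (α : R) (r : Fin n → R) (D : Matrix (Fin n) (Fin n) R) :
    (borderedMatrix α r D).submatrix Fin.succ Fin.succ = D := by
  ext i j
  simp [borderedMatrix]

theorem IsSymm.eq_borderedMatrix {A : Matrix (Fin (n + 1)) (Fin (n + 1)) R} (hA : A.IsSymm) :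
    A = borderedMatrix (A 0 0) (fun j => A 0 j.succ) (A.submatrix Fin.succ Fin.succ) := by
  ext i j
  induction i using Fin.cases <;> induction j using Fin.cases <;>
    simp [borderedMatrix, hA.apply _ 0]

theorem PosDef.of_borderedMatrix [Ring R] [PartialOrder R] [StarRing R] {α : R} {r : Fin n → R}
    {D : Matrix (Fin n) (Fin n) R} (h : (borderedMatrix α r D).PosDef) : D.PosDef := by
  simpa using h.submatrix (Fin.succ_injective _)

end Bordered

section Field

variable {K : Type*} [Field K] {n : ℕ} {α : K} {r : Fin n → K} {D : Matrix (Fin n) (Fin n) K}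

theorem IsSymm.dotProduct_mulVec_comm (hD : D.IsSymm) (v w : Fin n → K) :
    v ⬝ᵥ D *ᵥ w = w ⬝ᵥ D *ᵥ v := by
  rw [dotProduct_mulVec, ← mulVec_transpose, hD.eq, dotProduct_comm]

theorem borderedMatrix_mulVec_schur_solution (hD : IsUnit D.det) {a w : K} {b : Fin n → K}
    (hw : (α - r ⬝ᵥ D⁻¹ *ᵥ r) * w = a - r ⬝ᵥ D⁻¹ *ᵥ b) :
    borderedMatrix α r D *ᵥ vecCons w (D⁻¹ *ᵥ b - w • D⁻¹ *ᵥ r) = vecCons a b := by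
  have hDD : ∀ v, D *ᵥ D⁻¹ *ᵥ v = v := fun v => by
    rw [mulVec_mulVec, mul_nonsing_inv _ hD, one_mulVec]
  rw [borderedMatrix_mulVec_vecCons, mulVec_sub, mulVec_smul, hDD, hDD, dotProduct_sub,
    dotProduct_smul, smul_eq_mul, add_sub_cancel]
  congr 1
  linear_combination hw

theorem isUnit_det_borderedMatrix (hD : IsUnit D.det) (hS : α - r ⬝ᵥ D⁻¹ *ᵥ r ≠ 0) :
    IsUnit (borderedMatrix α r D).det := by
  refine (isUnit_iff_isUnit_det _).1 (mulVec_surjective_iff_isUnit.1 fun y => ?_)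
  rw [← cons_head_tail y]
  exact ⟨_, borderedMatrix_mulVec_schur_solution hD (mul_inv_cancel_left₀ hS _)⟩

theorem borderedMatrix_inv_mulVec_vecCons (hD : IsUnit D.det) (hS : α - r ⬝ᵥ D⁻¹ *ᵥ r ≠ 0)
    {a w : K} {b : Fin n → K} (hw : (α - r ⬝ᵥ D⁻¹ *ᵥ r) * w = a - r ⬝ᵥ D⁻¹ *ᵥ b) :
    (borderedMatrix α r D)⁻¹ *ᵥ vecCons a b = vecCons w (D⁻¹ *ᵥ b - w • D⁻¹ *ᵥ r) := by
  rw [← borderedMatrix_mulVec_schur_solution hD hw, mulVec_mulVec,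
    nonsing_inv_mul _ (isUnit_det_borderedMatrix hD hS), one_mulVec]

theorem vecCons_dotProduct_borderedMatrix_inv_mulVec_vecCons (hD : IsUnit D.det)
    (hDsymm : D.IsSymm) (hS : α - r ⬝ᵥ D⁻¹ *ᵥ r ≠ 0) (a : K) (b : Fin n → K) :
    vecCons a b ⬝ᵥ (borderedMatrix α r D)⁻¹ *ᵥ vecCons a b =
      b ⬝ᵥ D⁻¹ *ᵥ b + (α - r ⬝ᵥ D⁻¹ *ᵥ r)⁻¹ * (a - r ⬝ᵥ D⁻¹ *ᵥ b) ^ 2 := by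
  rw [borderedMatrix_inv_mulVec_vecCons hD hS (mul_inv_cancel_left₀ hS _), cons_dotProduct_cons,
    dotProduct_sub, dotProduct_smul, hDsymm.inv.dotProduct_mulVec_comm b r, smul_eq_mul]
  ring

theorem inv_sub_smul_vecMulVec_self (hD : IsUnit D.det) (hα : α ≠ 0)
    (hS : α - r ⬝ᵥ D⁻¹ *ᵥ r ≠ 0) :
    (D - α⁻¹ • vecMulVec r r)⁻¹ =
      D⁻¹ + (α - r ⬝ᵥ D⁻¹ *ᵥ r)⁻¹ • vecMulVec (D⁻¹ *ᵥ r) (r ᵥ* D⁻¹) := by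
  refine inv_eq_left_inv ?_
  have hcoeff :
      (α - r ⬝ᵥ D⁻¹ *ᵥ r)⁻¹ - α⁻¹ - (α - r ⬝ᵥ D⁻¹ *ᵥ r)⁻¹ * α⁻¹ * (r ⬝ᵥ D⁻¹ *ᵥ r) = 0 := by
    field_simp
    ring
  simp only [add_mul, Matrix.mul_sub, Matrix.smul_mul, Matrix.mul_smul, mul_vecMulVec,
    vecMulVec_mul, vecMul_vecMul, nonsing_inv_mul _ hD, vecMul_one, smul_mulVec, vecMulVec_mulVec,
    op_smul_eq_smul, ← dotProduct_mulVec, smul_vecMulVec]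
  linear_combination (norm := module) hcoeff • vecMulVec (D⁻¹ *ᵥ r) r

theorem inv_sub_smul_vecMulVec_self_mulVec (hD : IsUnit D.det) (hα : α ≠ 0)
    (hS : α - r ⬝ᵥ D⁻¹ *ᵥ r ≠ 0) :
    (D - α⁻¹ • vecMulVec r r)⁻¹ *ᵥ r = (α * (α - r ⬝ᵥ D⁻¹ *ᵥ r)⁻¹) • D⁻¹ *ᵥ r := by
  rw [inv_sub_smul_vecMulVec_self hD hα hS, add_mulVec, smul_mulVec, vecMulVec_mulVec,
    op_smul_eq_smul, ← dotProduct_mulVec, smul_smul]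
  have hcoeff : 1 + (α - r ⬝ᵥ D⁻¹ *ᵥ r)⁻¹ * (r ⬝ᵥ D⁻¹ *ᵥ r) = α * (α - r ⬝ᵥ D⁻¹ *ᵥ r)⁻¹ := by
    field_simp
    ring
  rw [← hcoeff, add_smul, one_smul]

/-- `E`, `G`, `H`, `F` are the blocks of `(borderedMatrix α r D)⁻¹`, so the left side is
`κᵀ (borderedMatrix α r D)⁻¹ κ - bᵀ D⁻¹ b` for `κ = vecCons a b`. -/
theorem inv_blocks_quadratic_eq_sq (hD : IsUnit D.det) (hDsymm : D.IsSymm) (hα : α ≠ 0)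
    (hS : α - r ⬝ᵥ D⁻¹ *ᵥ r ≠ 0) {E : K} {F : Matrix (Fin n) (Fin n) K} {G H : Fin n → K}
    (hE : E = (α - r ⬝ᵥ D⁻¹ *ᵥ r)⁻¹) (hF : F = (D - α⁻¹ • vecMulVec r r)⁻¹)
    (hG : G = -(E • (r ᵥ* D⁻¹))) (hH : H = -(α⁻¹ • (F *ᵥ r))) (a : K) (b : Fin n → K) :
    E * a ^ 2 + a * ((G + H) ⬝ᵥ b) + b ⬝ᵥ (F - D⁻¹) *ᵥ b = E * (a - r ⬝ᵥ D⁻¹ *ᵥ b) ^ 2 := by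
  have hu : r ᵥ* D⁻¹ = D⁻¹ *ᵥ r := by rw [← mulVec_transpose, hDsymm.inv.eq]
  have hGH : G + H = -(2 * E) • D⁻¹ *ᵥ r := by
    rw [hG, hH, hF, inv_sub_smul_vecMulVec_self_mulVec hD hα hS, hu, smul_smul, ← hE,
      inv_mul_cancel_left₀ hα]
    module
  rw [hGH, hF, inv_sub_smul_vecMulVec_self hD hα hS, ← hE, add_sub_cancel_left, smul_mulVec,
    vecMulVec_mulVec, op_smul_eq_smul, dotProduct_smul, dotProduct_smul, smul_dotProduct,
    dotProduct_comm b, dotProduct_mulVec r, hu, smul_eq_mul, smul_eq_mul, smul_eq_mul]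
  ring

end Field

section Ordered

variable {K : Type*} [Field K] [LinearOrder K] [IsStrictOrderedRing K] [StarRing K] [TrivialStar K]
  {n : ℕ} {α : K} {r : Fin n → K} {D : Matrix (Fin n) (Fin n) K}

theorem PosDef.borderedMatrix_schur_pos (h : (borderedMatrix α r D).PosDef) :
    0 < α - r ⬝ᵥ D⁻¹ *ᵥ r := by
  have hD : IsUnit D.det := (isUnit_iff_isUnit_det _).1 h.of_borderedMatrix.isUnit
  -- the test vector `(1, -D⁻¹ r)`, in the shape of `borderedMatrix_mulVec_schur_solution`
  have hx : vecCons 1 (D⁻¹ *ᵥ 0 - (1 : K) • D⁻¹ *ᵥ r) ≠ 0 := fun h0 => by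
    simpa using congrFun h0 0
  have := h.dotProduct_mulVec_pos hx
  rwa [star_trivial, borderedMatrix_mulVec_schur_solution hD (a := α - r ⬝ᵥ D⁻¹ *ᵥ r)
    (by simp), cons_dotProduct_cons, dotProduct_zero, one_mul, add_zero] at this

end Ordered

end Matrix

theorem stmt_4_general
    (d n : ℕ)
    (lam sig : ℝ)
    (kS kT : ℝ → ℝ)
    (hkS0 : kS 0 = 1) (hkT0 : kT 0 = 1)
    (k : (EuclideanSpace ℝ (Fin d) × ℝ) → (EuclideanSpace ℝ (Fin d) × ℝ) → ℝ)
    (hk : ∀ p q, k p q = lam * kS (‖p.1 - q.1‖) * kT (|p.2 - q.2|))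
    (pts : Fin (n + 1) → EuclideanSpace ℝ (Fin d) × ℝ)
    (Δ : Matrix (Fin (n + 1)) (Fin (n + 1)) ℝ)
    (hΔ : ∀ i j, Δ i j = k (pts i) (pts j) + sig ^ 2 * (if i = j then 1 else 0))
    (hPD : Δ.PosDef)
    (Δt : Matrix (Fin n) (Fin n) ℝ)
    (hΔt : Δt = Δ.submatrix Fin.succ Fin.succ)
    (k1 : Fin n → ℝ)
    (hk1 : ∀ j : Fin n, k1 j = k (pts 0) (pts j.succ))
    (E : ℝ) (hE : E = (lam + sig ^ 2 - k1 ⬝ᵥ Δt⁻¹ *ᵥ k1)⁻¹)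
    (F : Matrix (Fin n) (Fin n) ℝ)
    (hF : F = (Δt - (lam + sig ^ 2)⁻¹ • vecMulVec k1 k1)⁻¹)
    (G : Fin n → ℝ) (hG : G = -(E • (k1 ᵥ* Δt⁻¹)))
    (H : Fin n → ℝ) (hH : H = -((lam + sig ^ 2)⁻¹ • (F *ᵥ k1)))
    (σ2D σ2Dt : (EuclideanSpace ℝ (Fin d) × ℝ) → ℝ)
    (hσ2D : ∀ p, σ2D p = lam -
      (fun i : Fin (n + 1) => k p (pts i)) ⬝ᵥ Δ⁻¹ *ᵥ (fun i : Fin (n + 1) => k p (pts i)))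
    (hσ2Dt : ∀ p, σ2Dt p = lam -
      (fun j : Fin n => k p (pts j.succ)) ⬝ᵥ Δt⁻¹ *ᵥ (fun j : Fin n => k p (pts j.succ)))
    (σD σDt : (EuclideanSpace ℝ (Fin d) × ℝ) → ℝ)
    (hσD : ∀ p, σD p = Real.sqrt (σ2D p))
    (hσDt : ∀ p, σDt p = Real.sqrt (σ2Dt p))
    (c : Fin n → ℝ) (hc : c = G + H)
    (M : Matrix (Fin n) (Fin n) ℝ) (hM : M = F - Δt⁻¹) :
    ∀ p : EuclideanSpace ℝ (Fin d) × ℝ,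
      (σD p - σDt p) ^ 2 ≤
        E * (k p (pts 0)) ^ 2 + k p (pts 0) * ∑ j : Fin n, c j * k p (pts j.succ) +
          (fun j : Fin n => k p (pts j.succ)) ⬝ᵥ M *ᵥ (fun j : Fin n => k p (pts j.succ)) := by
  intro p
  have h00 : Δ 0 0 = lam + sig ^ 2 := by simp [hΔ, hk, hkS0, hkT0]
  have h0succ : (fun j => Δ 0 j.succ) = k1 :=
    funext fun j => by simp [hΔ, hk1, (Fin.succ_ne_zero j).symm]
  have hα : 0 < lam + sig ^ 2 := h00 ▸ hPD.diag_pos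
  have hΔbordered : Δ = borderedMatrix (lam + sig ^ 2) k1 Δt := by
    rw [← h00, ← h0succ, hΔt]
    exact IsSymm.eq_borderedMatrix hPD.isHermitian
  subst hΔbordered
  have hΔtdet : IsUnit Δt.det := (isUnit_iff_isUnit_det _).1 hPD.of_borderedMatrix.isUnit
  have hΔtsymm : Δt.IsSymm := hPD.of_borderedMatrix.isHermitian
  have hS := hPD.borderedMatrix_schur_pos
  set b := fun j : Fin n => k p (pts j.succ)
  have hgap : σ2Dt p - σ2D p = E * (k p (pts 0) - k1 ⬝ᵥ Δt⁻¹ *ᵥ b) ^ 2 := by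
    have hκ : (fun i => k p (pts i)) = vecCons (k p (pts 0)) b := (cons_head_tail _).symm
    rw [hσ2D, hσ2Dt, hκ,
      vecCons_dotProduct_borderedMatrix_inv_mulVec_vecCons hΔtdet hΔtsymm hS.ne', hE]
    ring
  have hrhs :=
    inv_blocks_quadratic_eq_sq hΔtdet hΔtsymm hα.ne' hS.ne' hE hF hG hH (k p (pts 0)) b
  rw [← hc, ← hM, ← hgap] at hrhs
  have hE0 : 0 ≤ E := hE ▸ (inv_pos.2 hS).le
  rw [hσD, hσDt]
  exact hrhs ▸ Real.sqrt_sub_sqrt_sq_le (sub_nonneg.1 (hgap ▸ by positivity))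

/-- Proposition 2 of the paper: pointwise bound on the squared difference of posterior
standard deviations after removing the first observation. -/
theorem stmt_4
    (d n : ℕ) (hd : 1 ≤ d) (hn : 1 ≤ n)
    (lam sig : ℝ) (hlam : 0 < lam) (hsig : 0 < sig)
    (kS kT : ℝ → ℝ)
    (hkSmeas : Measurable kS) (hkTmeas : Measurable kT)
    (hkSrange : ∀ r, kS r ∈ Set.Icc (0 : ℝ) 1) (hkTrange : ∀ r, kT r ∈ Set.Icc (0 : ℝ) 1)
    (hkS0 : kS 0 = 1) (hkT0 : kT 0 = 1)
    (k : (EuclideanSpace ℝ (Fin d) × ℝ) → (EuclideanSpace ℝ (Fin d) × ℝ) → ℝ)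
    (hk : ∀ p q, k p q = lam * kS (‖p.1 - q.1‖) * kT (|p.2 - q.2|))
    (pts : Fin (n + 1) → EuclideanSpace ℝ (Fin d) × ℝ)
    (Δ : Matrix (Fin (n + 1)) (Fin (n + 1)) ℝ)
    (hΔ : ∀ i j, Δ i j = k (pts i) (pts j) + sig ^ 2 * (if i = j then 1 else 0))
    (hPD : Δ.PosDef)
    (Δt : Matrix (Fin n) (Fin n) ℝ)
    (hΔt : Δt = Δ.submatrix Fin.succ Fin.succ)
    (k1 : Fin n → ℝ)
    (hk1 : ∀ j : Fin n, k1 j = k (pts 0) (pts j.succ))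
    (E : ℝ) (hE : E = (lam + sig ^ 2 - k1 ⬝ᵥ Δt⁻¹ *ᵥ k1)⁻¹)
    (F : Matrix (Fin n) (Fin n) ℝ)
    (hF : F = (Δt - (lam + sig ^ 2)⁻¹ • vecMulVec k1 k1)⁻¹)
    (G : Fin n → ℝ) (hG : G = -(E • (k1 ᵥ* Δt⁻¹)))
    (H : Fin n → ℝ) (hH : H = -((lam + sig ^ 2)⁻¹ • (F *ᵥ k1)))
    (σ2D σ2Dt : (EuclideanSpace ℝ (Fin d) × ℝ) → ℝ)
    (hσ2D : ∀ p, σ2D p = lam -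
      (fun i : Fin (n + 1) => k p (pts i)) ⬝ᵥ Δ⁻¹ *ᵥ (fun i : Fin (n + 1) => k p (pts i)))
    (hσ2Dt : ∀ p, σ2Dt p = lam -
      (fun j : Fin n => k p (pts j.succ)) ⬝ᵥ Δt⁻¹ *ᵥ (fun j : Fin n => k p (pts j.succ)))
    (hborder : ∀ p : EuclideanSpace ℝ (Fin d) × ℝ,
      (Matrix.fromBlocks
        (Matrix.of fun (_ : Fin 1) (_ : Fin 1) => lam)
        (Matrix.of fun (_ : Fin 1) (j : Fin (n + 1)) => k p (pts j))
        (Matrix.of fun (i : Fin (n + 1)) (_ : Fin 1) => k p (pts i))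
        Δ).PosSemidef)
    (σD σDt : (EuclideanSpace ℝ (Fin d) × ℝ) → ℝ)
    (hσD : ∀ p, σD p = Real.sqrt (σ2D p))
    (hσDt : ∀ p, σDt p = Real.sqrt (σ2Dt p))
    (c : Fin n → ℝ) (hc : c = G + H)
    (M : Matrix (Fin n) (Fin n) ℝ) (hM : M = F - Δt⁻¹) :
    ∀ p : EuclideanSpace ℝ (Fin d) × ℝ,
      (σD p - σDt p) ^ 2 ≤
        E * (k p (pts 0)) ^ 2 + k p (pts 0) * ∑ j : Fin n, c j * k p (pts j.succ) +
          (fun j : Fin n => k p (pts j.succ)) ⬝ᵥ M *ᵥ (fun j : Fin n => k p (pts j.succ)) :=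
  stmt_4_general d n lam sig kS kT hkS0 hkT0 k hk pts Δ hΔ hPD Δt hΔt k1 hk1 E hE F hF G hG H hH σ2D
    σ2Dt hσ2D hσ2Dt σD σDt hσD hσDt c hc M hM
end

section
/- The squared difference of posterior means integrated over the domain of future predictions satisfies ∫_S ∫_{t₀}^{+∞} (μ_D(x,t) − μ_D̃(x,t))² dt dx ≤ λ²·a²·C₁₁ + 2λ²·a·Σ_{j=2}^{n} b_j·C_{1j} + λ²·Σ_{i=2}^{n} Σ_{j=2}^{n} b_i·b_j·C_{ij}, where a = E·y₁ + G·ỹ ∈ ℝ and b ∈ ℝ^{n−1} is defined by bᵀ = y₁·Hᵀ + ỹᵀ(F − Δ̃⁻¹). -/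
/-!
Solving `Δ z = y` by elimination of the first coordinate gives
`z = (a, Δ̃⁻¹ ỹ - a Δ̃⁻¹ k₁)`, where `a` is divided by the Schur complement
`λ + σ² - k₁ᵀ Δ̃⁻¹ k₁`, nonzero because `Δ` is invertible; the Sherman–Morrison
formula for `F` identifies the correction `-a Δ̃⁻¹ k₁` with `b`. Hence
`μ_D - μ_D̃ = λ ∑ᵢ cᵢ k_S(‖x - xᵢ‖) k_T(|t - tᵢ|)` with `c = (a, b)`. The square of such a
separable sum integrates over `ℝ^d × (t₀, ∞)` to `λ² cᵀ C c`, since after a translation each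
product of two kernels integrates to the corresponding convolution; restricting `x` to `S`
can only decrease the integral of a nonnegative function.
-/

open Matrix MeasureTheory

namespace Matrix

variable {K : Type*} [Field K]

section ShermanMorrison

variable {ι : Type*} [Fintype ι] [DecidableEq ι] {D : Matrix ι ι K}

theorem inv_sub_smul_vecMulVec (hD : IsUnit D.det) (u v : ι → K) {α : K} (hα : α ≠ 0)
    (hs : α - v ⬝ᵥ D⁻¹ *ᵥ u ≠ 0) :
    (D - α⁻¹ • vecMulVec u v)⁻¹
      = D⁻¹ + (α - v ⬝ᵥ D⁻¹ *ᵥ u)⁻¹ • vecMulVec (D⁻¹ *ᵥ u) (v ᵥ* D⁻¹) := by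
  set s := α - v ⬝ᵥ D⁻¹ *ᵥ u
  have key : s⁻¹ - α⁻¹ - α⁻¹ * (s⁻¹ * (v ⬝ᵥ D⁻¹ *ᵥ u)) = 0 := by
    field_simp
    ring
  refine inv_eq_right_inv ?_
  rw [sub_mul, mul_add, mul_add, mul_nonsing_inv _ hD, mul_smul_comm, mul_vecMulVec,
    mulVec_mulVec, mul_nonsing_inv _ hD, one_mulVec, smul_mul_assoc, vecMulVec_mul,
    smul_mul_assoc, mul_smul_comm, vecMulVec_mul_vecMulVec, vecMulVec_smul]
  linear_combination (norm := module) key • vecMulVec u (v ᵥ* D⁻¹)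

theorem inv_sub_smul_vecMulVec_mulVec (hD : IsUnit D.det) (u v : ι → K) {α : K} (hα : α ≠ 0)
    (hs : α - v ⬝ᵥ D⁻¹ *ᵥ u ≠ 0) :
    (D - α⁻¹ • vecMulVec u v)⁻¹ *ᵥ u = (α * (α - v ⬝ᵥ D⁻¹ *ᵥ u)⁻¹) • (D⁻¹ *ᵥ u) := by
  have key : 1 + (α - v ⬝ᵥ D⁻¹ *ᵥ u)⁻¹ * (v ⬝ᵥ D⁻¹ *ᵥ u) = α * (α - v ⬝ᵥ D⁻¹ *ᵥ u)⁻¹ := by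
    field_simp
    ring
  rw [inv_sub_smul_vecMulVec hD u v hα hs, add_mulVec, smul_mulVec, vecMulVec_mulVec,
    ← dotProduct_mulVec, ← key]
  simp only [op_smul_eq_smul]
  module

theorem vecMul_inv_sub_smul_vecMulVec_sub_inv (hD : IsUnit D.det) (u v : ι → K) {α : K}
    (hα : α ≠ 0) (hs : α - v ⬝ᵥ D⁻¹ *ᵥ u ≠ 0) (y : ι → K) :
    y ᵥ* ((D - α⁻¹ • vecMulVec u v)⁻¹ - D⁻¹)
      = ((α - v ⬝ᵥ D⁻¹ *ᵥ u)⁻¹ * (y ⬝ᵥ D⁻¹ *ᵥ u)) • (v ᵥ* D⁻¹) := by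
  rw [inv_sub_smul_vecMulVec hD u v hα hs, add_sub_cancel_left, vecMul_smul, vecMul_vecMulVec,
    smul_smul]

end ShermanMorrison

section BlockSolve

variable {n : ℕ} {Δ : Matrix (Fin (n + 1)) (Fin (n + 1)) K} {α : K} {r c : Fin n → K}
  {D : Matrix (Fin n) (Fin n) K}

theorem mulVec_vecCons_inv_mulVec_sub_smul (hD : IsUnit D.det) (h00 : Δ 0 0 = α)
    (h0s : ∀ j, Δ 0 j.succ = r j) (hs0 : ∀ i, Δ i.succ 0 = c i)
    (hss : ∀ i j, Δ i.succ j.succ = D i j) (t : K) (x : Fin n → K) :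
    Δ *ᵥ vecCons t (D⁻¹ *ᵥ x - t • D⁻¹ *ᵥ c)
      = vecCons ((α - r ⬝ᵥ D⁻¹ *ᵥ c) * t + r ⬝ᵥ D⁻¹ *ᵥ x) x := by
  funext i
  refine Fin.cases ?_ (fun i => ?_) i
  · have hrow : vecTail (Δ 0) = r := funext h0s
    change Δ 0 ⬝ᵥ _ = _
    rw [dotProduct_cons, hrow, vecHead, h00, cons_val_zero, dotProduct_sub, dotProduct_smul,
      smul_eq_mul]
    ring
  · have hrow : vecTail (Δ i.succ) = D i := funext (hss i)
    change Δ i.succ ⬝ᵥ _ = _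
    rw [dotProduct_cons, hrow, vecHead, hs0, cons_val_succ]
    change _ + (D *ᵥ _) i = _
    rw [mulVec_sub, mulVec_smul, mulVec_mulVec, mulVec_mulVec, mul_nonsing_inv _ hD,
      one_mulVec, one_mulVec, Pi.sub_apply, Pi.smul_apply, smul_eq_mul]
    ring

theorem sub_dotProduct_inv_mulVec_ne_zero (hΔ : IsUnit Δ.det)
    (hD : IsUnit D.det) (h00 : Δ 0 0 = α) (h0s : ∀ j, Δ 0 j.succ = r j)
    (hs0 : ∀ i, Δ i.succ 0 = c i) (hss : ∀ i j, Δ i.succ j.succ = D i j) :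
    α - r ⬝ᵥ D⁻¹ *ᵥ c ≠ 0 := by
  -- otherwise `Δ` would kill the nonzero vector `(1, -D⁻¹ c)`
  intro hs
  have h := mulVec_vecCons_inv_mulVec_sub_smul hD h00 h0s hs0 hss 1 0
  rw [hs, zero_mul, zero_add, mulVec_zero, dotProduct_zero, cons_zero_zero] at h
  simpa using congrFun (eq_zero_of_mulVec_eq_zero hΔ.ne_zero h) 0

theorem inv_mulVec_eq_vecCons (hΔ : IsUnit Δ.det) (hD : IsUnit D.det) (h00 : Δ 0 0 = α)
    (h0s : ∀ j, Δ 0 j.succ = r j) (hs0 : ∀ i, Δ i.succ 0 = c i)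
    (hss : ∀ i j, Δ i.succ j.succ = D i j) (y : Fin (n + 1) → K) :
    Δ⁻¹ *ᵥ y = vecCons ((α - r ⬝ᵥ D⁻¹ *ᵥ c)⁻¹ * (y 0 - r ⬝ᵥ D⁻¹ *ᵥ vecTail y))
      (D⁻¹ *ᵥ vecTail y - ((α - r ⬝ᵥ D⁻¹ *ᵥ c)⁻¹ * (y 0 - r ⬝ᵥ D⁻¹ *ᵥ vecTail y)) • D⁻¹ *ᵥ c) := by
  have hs := sub_dotProduct_inv_mulVec_ne_zero hΔ hD h00 h0s hs0 hss
  have h := mulVec_vecCons_inv_mulVec_sub_smul hD h00 h0s hs0 hss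
    ((α - r ⬝ᵥ D⁻¹ *ᵥ c)⁻¹ * (y 0 - r ⬝ᵥ D⁻¹ *ᵥ vecTail y)) (vecTail y)
  rw [mul_inv_cancel_left₀ hs, sub_add_cancel] at h
  conv_lhs => rw [← cons_head_tail y, vecHead, ← h]
  rw [mulVec_mulVec, nonsing_inv_mul _ hΔ, one_mulVec]

theorem inv_mulVec_eq_vecCons_of_transpose_eq {u : Fin n → K} (hΔ : IsUnit Δ.det)
    (hD : IsUnit D.det) (hDT : Dᵀ = D) (hα : α ≠ 0) (h00 : Δ 0 0 = α)
    (h0s : ∀ j, Δ 0 j.succ = u j) (hs0 : ∀ i, Δ i.succ 0 = u i)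
    (hss : ∀ i j, Δ i.succ j.succ = D i j) (y : Fin (n + 1) → K) :
    Δ⁻¹ *ᵥ y = vecCons
      ((α - u ⬝ᵥ D⁻¹ *ᵥ u)⁻¹ * y 0 + -((α - u ⬝ᵥ D⁻¹ *ᵥ u)⁻¹ • (u ᵥ* D⁻¹)) ⬝ᵥ vecTail y)
      (D⁻¹ *ᵥ vecTail y + (y 0 • -(α⁻¹ • ((D - α⁻¹ • vecMulVec u u)⁻¹ *ᵥ u))
        + vecTail y ᵥ* ((D - α⁻¹ • vecMulVec u u)⁻¹ - D⁻¹))) := by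
  have hs := sub_dotProduct_inv_mulVec_ne_zero hΔ hD h00 h0s hs0 hss
  have hu : u ᵥ* D⁻¹ = D⁻¹ *ᵥ u := by
    rw [← mulVec_transpose, transpose_nonsing_inv, hDT]
  have hy : u ⬝ᵥ D⁻¹ *ᵥ vecTail y = vecTail y ⬝ᵥ D⁻¹ *ᵥ u := by
    rw [dotProduct_mulVec, hu, dotProduct_comm]
  rw [inv_mulVec_eq_vecCons hΔ hD h00 h0s hs0 hss, inv_sub_smul_vecMulVec_mulVec hD u u hα hs,
    vecMul_inv_sub_smul_vecMulVec_sub_inv hD u u hα hs, hu, neg_dotProduct, smul_dotProduct,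
    dotProduct_comm (D⁻¹ *ᵥ u), ← hy]
  congr 1
  · simp only [smul_eq_mul]
    ring
  · rw [smul_smul, inv_mul_cancel_left₀ hα]
    module

end BlockSolve

-- The two entries are `E y₀ + G ỹ` and `Δ̃⁻¹ ỹ + (y₀ H + ỹᵀ (F - Δ̃⁻¹))` in the paper's notation.
theorem PosDef.inv_mulVec_eq_vecCons {n : ℕ} {Δ : Matrix (Fin (n + 1)) (Fin (n + 1)) ℝ}
    (hΔ : Δ.PosDef) {α : ℝ} {u : Fin n → ℝ} {D : Matrix (Fin n) (Fin n) ℝ} (h00 : Δ 0 0 = α)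
    (h0s : ∀ j, Δ 0 j.succ = u j) (hD : Δ.submatrix Fin.succ Fin.succ = D)
    (y : Fin (n + 1) → ℝ) :
    Δ⁻¹ *ᵥ y = vecCons
      ((α - u ⬝ᵥ D⁻¹ *ᵥ u)⁻¹ * y 0 + -((α - u ⬝ᵥ D⁻¹ *ᵥ u)⁻¹ • (u ᵥ* D⁻¹)) ⬝ᵥ vecTail y)
      (D⁻¹ *ᵥ vecTail y + (y 0 • -(α⁻¹ • ((D - α⁻¹ • vecMulVec u u)⁻¹ *ᵥ u))
        + vecTail y ᵥ* ((D - α⁻¹ • vecMulVec u u)⁻¹ - D⁻¹))) := by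
  have hsymm : ∀ i j, Δ j i = Δ i j := fun i j => by simpa using hΔ.1.apply i j
  have hss : ∀ i j, Δ i.succ j.succ = D i j := fun i j => by rw [← hD, submatrix_apply]
  have hDPD : D.PosDef := hD ▸ hΔ.submatrix (Fin.succ_injective _)
  refine inv_mulVec_eq_vecCons_of_transpose_eq ((isUnit_iff_isUnit_det _).mp hΔ.isUnit)
    ((isUnit_iff_isUnit_det _).mp hDPD.isUnit) ?_ (h00 ▸ hΔ.diag_pos.ne') h00 h0s
    (fun i => by rw [hsymm, h0s]) hss y
  ext i j
  rw [transpose_apply, ← hss, ← hss, hsymm]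

theorem dotProduct_vecCons_add_sub {R : Type*} [CommRing R] {n : ℕ} (v : Fin (n + 1) → R)
    (a : R) (w b : Fin n → R) :
    v ⬝ᵥ vecCons a (w + b) - vecTail v ⬝ᵥ w = v ⬝ᵥ vecCons a b := by
  rw [dotProduct_cons, dotProduct_cons, dotProduct_add]
  ring

theorem sum_sum_vecCons_mul_vecCons {R : Type*} [CommRing R] {n : ℕ}
    {C : Matrix (Fin (n + 1)) (Fin (n + 1)) R} (hC : C.IsSymm) (l a : R) (b : Fin n → R) :
    ∑ i, ∑ j, l * vecCons a b i * (l * vecCons a b j) * C i j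
      = l ^ 2 * a ^ 2 * C 0 0 + 2 * l ^ 2 * a * ∑ j, b j * C 0 j.succ
        + l ^ 2 * ∑ i, ∑ j, b i * b j * C i.succ j.succ := by
  have hrow : ∑ j : Fin n, l * a * (l * b j) * C 0 j.succ
      = l ^ 2 * a * ∑ j, b j * C 0 j.succ := by
    rw [Finset.mul_sum]
    exact Finset.sum_congr rfl fun j _ => by ring
  have hcol : ∑ i : Fin n, l * b i * (l * a) * C i.succ 0
      = l ^ 2 * a * ∑ j, b j * C 0 j.succ := by
    rw [← hrow]
    exact Finset.sum_congr rfl fun i _ => by rw [hC.apply 0 i.succ]; ring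
  have hblock : ∑ i : Fin n, ∑ j : Fin n, l * b i * (l * b j) * C i.succ j.succ
      = l ^ 2 * ∑ i, ∑ j, b i * b j * C i.succ j.succ := by
    simp only [Finset.mul_sum]
    exact Finset.sum_congr rfl fun i _ => Finset.sum_congr rfl fun j _ => by ring
  simp only [Fin.sum_univ_succ, cons_val_zero, cons_val_succ, Finset.sum_add_distrib]
  linear_combination hrow + hcol + hblock

end Matrix

section Translation

variable {G : Type*} [NormedAddCommGroup G] (h : ℝ → ℝ) (p q : G)

theorem comp_norm_sub_mul_comp_norm_sub :
    (fun x => h ‖x - p‖ * h ‖x - q‖) = (fun u => h ‖u‖ * h ‖q - p - u‖) ∘ (· - p) := by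
  funext x
  rw [Function.comp_apply, sub_sub_sub_cancel_right, norm_sub_rev q x]

variable [MeasurableSpace G] [MeasurableAdd G] (μ : Measure G) [μ.IsAddRightInvariant] (s : Set G)

theorem setIntegral_comp_norm_sub_mul :
    ∫ x in (· - p) ⁻¹' s, h ‖x - p‖ * h ‖x - q‖ ∂μ = ∫ u in s, h ‖u‖ * h ‖q - p - u‖ ∂μ := by
  rw [comp_norm_sub_mul_comp_norm_sub]
  exact (measurePreserving_sub_right μ p).setIntegral_preimage_emb
    (MeasurableEquiv.subRight p).measurableEmbedding (fun u => h ‖u‖ * h ‖q - p - u‖) s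

theorem integrableOn_comp_norm_sub_mul_iff :
    IntegrableOn (fun x => h ‖x - p‖ * h ‖x - q‖) ((· - p) ⁻¹' s) μ
      ↔ IntegrableOn (fun u => h ‖u‖ * h ‖q - p - u‖) s μ := by
  rw [comp_norm_sub_mul_comp_norm_sub]
  exact (measurePreserving_sub_right μ p).integrableOn_comp_preimage
    (MeasurableEquiv.subRight p).measurableEmbedding

theorem integral_comp_norm_sub_mul :
    ∫ x, h ‖x - p‖ * h ‖x - q‖ ∂μ = ∫ u, h ‖u‖ * h ‖q - p - u‖ ∂μ := by
  simpa using setIntegral_comp_norm_sub_mul h p q μ Set.univ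

theorem Integrable.comp_norm_sub_mul (hint : Integrable (fun u => h ‖u‖ * h ‖q - p - u‖) μ) :
    Integrable (fun x => h ‖x - p‖ * h ‖x - q‖) μ := by
  simpa using (integrableOn_comp_norm_sub_mul_iff h p q μ Set.univ).mpr hint.integrableOn

end Translation

section HalfLine

variable (h : ℝ → ℝ) (t₀ p q : ℝ)

theorem Set.preimage_sub_const_Ioi_sub : (· - p) ⁻¹' Set.Ioi (t₀ - p) = Set.Ioi t₀ := by
  rw [Set.preimage_sub_const_Ioi, sub_add_cancel]

theorem setIntegral_Ioi_comp_abs_sub_mul :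
    ∫ t in Set.Ioi t₀, h |t - p| * h |t - q| = ∫ τ in Set.Ioi (t₀ - p), h |τ| * h |q - p - τ| := by
  simpa only [Set.preimage_sub_const_Ioi_sub, Real.norm_eq_abs] using
    setIntegral_comp_norm_sub_mul h p q volume (Set.Ioi (t₀ - p))

theorem IntegrableOn.comp_abs_sub_mul
    (hint : IntegrableOn (fun τ => h |τ| * h |q - p - τ|) (Set.Ioi (t₀ - p))) :
    IntegrableOn (fun t => h |t - p| * h |t - q|) (Set.Ioi t₀) := by
  simpa only [Set.preimage_sub_const_Ioi_sub, Real.norm_eq_abs] using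
    (integrableOn_comp_norm_sub_mul_iff h p q volume (Set.Ioi (t₀ - p))).mpr hint

end HalfLine

section SeparableSquare

variable {X Y ι : Type*} [Fintype ι]

theorem sq_sum_mul_mul (c : ι → ℝ) (f : ι → X → ℝ) (g : ι → Y → ℝ) (x : X) (y : Y) :
    (∑ i, c i * (f i x * g i y)) ^ 2
      = ∑ i, ∑ j, c i * c j * ((f i x * f j x) * (g i y * g j y)) := by
  rw [sq, Finset.sum_mul_sum]
  exact Finset.sum_congr rfl fun i _ => Finset.sum_congr rfl fun j _ => by ring

variable [MeasurableSpace X] [MeasurableSpace Y] {μ : Measure X} {ν : Measure Y}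
  {f : ι → X → ℝ} {g : ι → Y → ℝ}

theorem integrable_sq_sum_mul_mul (hf : ∀ i j, Integrable (fun x => f i x * f j x) μ)
    (hg : ∀ i j, Integrable (fun y => g i y * g j y) ν) (c : ι → ℝ) :
    Integrable (fun z : X × Y => (∑ i, c i * (f i z.1 * g i z.2)) ^ 2) (μ.prod ν) := by
  simp_rw [sq_sum_mul_mul]
  exact integrable_finsetSum _ fun i _ => integrable_finsetSum _ fun j _ =>
    ((hf i j).mul_prod (hg i j)).const_mul _

variable [SFinite μ] [SFinite ν]

theorem integral_sq_sum_mul_mul (hf : ∀ i j, Integrable (fun x => f i x * f j x) μ)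
    (hg : ∀ i j, Integrable (fun y => g i y * g j y) ν) (c : ι → ℝ) :
    ∫ z, (∑ i, c i * (f i z.1 * g i z.2)) ^ 2 ∂μ.prod ν
      = ∑ i, ∑ j, c i * c j * ((∫ x, f i x * f j x ∂μ) * ∫ y, g i y * g j y ∂ν) := by
  have hint : ∀ i j, Integrable
      (fun z : X × Y => c i * c j * ((f i z.1 * f j z.1) * (g i z.2 * g j z.2))) (μ.prod ν) :=
    fun i j => ((hf i j).mul_prod (hg i j)).const_mul _
  simp_rw [sq_sum_mul_mul]
  rw [integral_finsetSum _ fun i _ => integrable_finsetSum _ fun j _ => hint i j]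
  refine Finset.sum_congr rfl fun i _ => ?_
  rw [integral_finsetSum _ fun j _ => hint i j]
  refine Finset.sum_congr rfl fun j _ => ?_
  rw [integral_const_mul, integral_prod_mul (fun x => f i x * f j x) fun y => g i y * g j y]

theorem setIntegral_integral_sq_sum_mul_mul_le
    (hf : ∀ i j, Integrable (fun x => f i x * f j x) μ)
    (hg : ∀ i j, Integrable (fun y => g i y * g j y) ν) (c : ι → ℝ) (S : Set X) :
    ∫ x in S, ∫ y, (∑ i, c i * (f i x * g i y)) ^ 2 ∂ν ∂μ
      ≤ ∑ i, ∑ j, c i * c j * ((∫ x, f i x * f j x ∂μ) * ∫ y, g i y * g j y ∂ν) := by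
  have hint := integrable_sq_sum_mul_mul hf hg c
  calc ∫ x in S, ∫ y, (∑ i, c i * (f i x * g i y)) ^ 2 ∂ν ∂μ
      ≤ ∫ x, ∫ y, (∑ i, c i * (f i x * g i y)) ^ 2 ∂ν ∂μ :=
        setIntegral_le_integral hint.integral_prod_left
          (Filter.Eventually.of_forall fun x => integral_nonneg fun y => sq_nonneg _)
    _ = ∫ z, (∑ i, c i * (f i z.1 * g i z.2)) ^ 2 ∂μ.prod ν := integral_integral hint
    _ = _ := integral_sq_sum_mul_mul hf hg c

end SeparableSquare

theorem stmt_6_general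
    (d n : ℕ)
    (lam sig : ℝ)
    (kS kT : ℝ → ℝ)
    (hkS0 : kS 0 = 1) (hkT0 : kT 0 = 1)
    (k : (EuclideanSpace ℝ (Fin d) × ℝ) → (EuclideanSpace ℝ (Fin d) × ℝ) → ℝ)
    (hk : ∀ p q, k p q = lam * kS (‖p.1 - q.1‖) * kT (|p.2 - q.2|))
    (pts : Fin (n + 1) → EuclideanSpace ℝ (Fin d) × ℝ)
    (y : Fin (n + 1) → ℝ)
    (Δ : Matrix (Fin (n + 1)) (Fin (n + 1)) ℝ)
    (hΔ : ∀ i j, Δ i j = k (pts i) (pts j) + sig ^ 2 * (if i = j then 1 else 0))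
    (hPD : Δ.PosDef)
    (Δt : Matrix (Fin n) (Fin n) ℝ)
    (hΔt : Δt = Δ.submatrix Fin.succ Fin.succ)
    (k1 : Fin n → ℝ)
    (hk1 : ∀ j : Fin n, k1 j = k (pts 0) (pts j.succ))
    (E : ℝ) (hE : E = (lam + sig ^ 2 - k1 ⬝ᵥ Δt⁻¹ *ᵥ k1)⁻¹)
    (F : Matrix (Fin n) (Fin n) ℝ)
    (hF : F = (Δt - (lam + sig ^ 2)⁻¹ • vecMulVec k1 k1)⁻¹)
    (G : Fin n → ℝ) (hG : G = -(E • (k1 ᵥ* Δt⁻¹)))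
    (H : Fin n → ℝ) (hH : H = -((lam + sig ^ 2)⁻¹ • (F *ᵥ k1)))
    (μD μDt : (EuclideanSpace ℝ (Fin d) × ℝ) → ℝ)
    (hμD : ∀ p, μD p = (fun i : Fin (n + 1) => k p (pts i)) ⬝ᵥ Δ⁻¹ *ᵥ y)
    (hμDt : ∀ p, μDt p =
      (fun j : Fin n => k p (pts j.succ)) ⬝ᵥ Δt⁻¹ *ᵥ (fun j : Fin n => y j.succ))
    (a : ℝ) (ha : a = E * y 0 + G ⬝ᵥ (fun j : Fin n => y j.succ))
    (b : Fin n → ℝ)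
    (hb : b = y 0 • H + (fun j : Fin n => y j.succ) ᵥ* (F - Δt⁻¹))
    (convS : EuclideanSpace ℝ (Fin d) → ℝ)
    (hconvS : ∀ v, convS v = ∫ u : EuclideanSpace ℝ (Fin d), kS ‖u‖ * kS ‖v - u‖)
    (convT : ℝ → ℝ → ℝ)
    (hconvT : ∀ a' s, convT a' s = ∫ τ in Set.Ioi a', kT |τ| * kT |s - τ|)
    (hintS : ∀ v : EuclideanSpace ℝ (Fin d),
      Integrable (fun u : EuclideanSpace ℝ (Fin d) => kS ‖u‖ * kS ‖v - u‖))
    (hintT : ∀ a' s : ℝ, IntegrableOn (fun τ => kT |τ| * kT |s - τ|) (Set.Ioi a'))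
    (t0 : ℝ) (S : Set (EuclideanSpace ℝ (Fin d)))
    (C : Matrix (Fin (n + 1)) (Fin (n + 1)) ℝ)
    (hC : ∀ i j, C i j =
      convS ((pts j).1 - (pts i).1) * convT (t0 - (pts i).2) ((pts j).2 - (pts i).2)) :
    (∫ x in S, ∫ t in Set.Ioi t0, (μD (x, t) - μDt (x, t)) ^ 2)
      ≤ lam ^ 2 * a ^ 2 * C 0 0 +
        2 * lam ^ 2 * a * ∑ j : Fin n, b j * C 0 j.succ +
        lam ^ 2 * ∑ i : Fin n, ∑ j : Fin n, b i * b j * C i.succ j.succ := by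
  have hα : Δ 0 0 = lam + sig ^ 2 := by simp [hΔ, hk, hkS0, hkT0]
  have h0s : ∀ j, Δ 0 j.succ = k1 j := fun j => by simp [hΔ, hk1, (Fin.succ_ne_zero j).symm]
  have hsol : Δ⁻¹ *ᵥ y = vecCons a (Δt⁻¹ *ᵥ vecTail y + b) := by
    rw [hPD.inv_mulVec_eq_vecCons hα h0s hΔt.symm, ha, hb, hG, hH, hE, hF]
    rfl
  have hdiff : ∀ x t, μD (x, t) - μDt (x, t)
      = ∑ i, lam * vecCons a b i * (kS ‖x - (pts i).1‖ * kT |t - (pts i).2|) := fun x t => by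
    rw [hμD, hμDt, hsol]
    refine (dotProduct_vecCons_add_sub _ a _ b).trans (Finset.sum_congr rfl fun i _ => ?_)
    dsimp only
    rw [hk]
    ring
  have hCint : ∀ i j, C i j = (∫ x, kS ‖x - (pts i).1‖ * kS ‖x - (pts j).1‖) *
      ∫ t in Set.Ioi t0, kT |t - (pts i).2| * kT |t - (pts j).2| := fun i j => by
    rw [hC, integral_comp_norm_sub_mul, setIntegral_Ioi_comp_abs_sub_mul, hconvS, hconvT]
  have hCsymm : C.IsSymm := IsSymm.ext fun i j => by
    simp only [hCint, mul_comm (kS ‖_ - (pts i).1‖), mul_comm (kT |_ - (pts i).2|)]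
  calc ∫ x in S, ∫ t in Set.Ioi t0, (μD (x, t) - μDt (x, t)) ^ 2
      = ∫ x in S, ∫ t in Set.Ioi t0,
          (∑ i, lam * vecCons a b i * (kS ‖x - (pts i).1‖ * kT |t - (pts i).2|)) ^ 2 := by
        simp_rw [hdiff]
    _ ≤ ∑ i, ∑ j, lam * vecCons a b i * (lam * vecCons a b j) *
          ((∫ x, kS ‖x - (pts i).1‖ * kS ‖x - (pts j).1‖) *
            ∫ t in Set.Ioi t0, kT |t - (pts i).2| * kT |t - (pts j).2|) :=
        setIntegral_integral_sq_sum_mul_mul_le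
          (fun i j => Integrable.comp_norm_sub_mul kS (pts i).1 (pts j).1 volume (hintS _))
          (fun i j => IntegrableOn.comp_abs_sub_mul kT t0 (pts i).2 (pts j).2 (hintT _ _)) _ S
    _ = _ := by
        simp_rw [← hCint]
        exact sum_sum_vecCons_mul_vecCons hCsymm lam a b

/-- Lemma 3 of the paper: integrated bound on the squared difference of posterior means
over the domain of future predictions. -/
theorem stmt_6
    (d n : ℕ) (hd : 1 ≤ d) (hn : 1 ≤ n)
    (lam sig : ℝ) (hlam : 0 < lam) (hsig : 0 < sig)
    (kS kT : ℝ → ℝ)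
    (hkSmeas : Measurable kS) (hkTmeas : Measurable kT)
    (hkSrange : ∀ r, kS r ∈ Set.Icc (0 : ℝ) 1) (hkTrange : ∀ r, kT r ∈ Set.Icc (0 : ℝ) 1)
    (hkS0 : kS 0 = 1) (hkT0 : kT 0 = 1)
    (k : (EuclideanSpace ℝ (Fin d) × ℝ) → (EuclideanSpace ℝ (Fin d) × ℝ) → ℝ)
    (hk : ∀ p q, k p q = lam * kS (‖p.1 - q.1‖) * kT (|p.2 - q.2|))
    (pts : Fin (n + 1) → EuclideanSpace ℝ (Fin d) × ℝ)
    (y : Fin (n + 1) → ℝ)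
    (Δ : Matrix (Fin (n + 1)) (Fin (n + 1)) ℝ)
    (hΔ : ∀ i j, Δ i j = k (pts i) (pts j) + sig ^ 2 * (if i = j then 1 else 0))
    (hPD : Δ.PosDef)
    (Δt : Matrix (Fin n) (Fin n) ℝ)
    (hΔt : Δt = Δ.submatrix Fin.succ Fin.succ)
    (k1 : Fin n → ℝ)
    (hk1 : ∀ j : Fin n, k1 j = k (pts 0) (pts j.succ))
    (E : ℝ) (hE : E = (lam + sig ^ 2 - k1 ⬝ᵥ Δt⁻¹ *ᵥ k1)⁻¹)
    (F : Matrix (Fin n) (Fin n) ℝ)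
    (hF : F = (Δt - (lam + sig ^ 2)⁻¹ • vecMulVec k1 k1)⁻¹)
    (G : Fin n → ℝ) (hG : G = -(E • (k1 ᵥ* Δt⁻¹)))
    (H : Fin n → ℝ) (hH : H = -((lam + sig ^ 2)⁻¹ • (F *ᵥ k1)))
    (μD μDt : (EuclideanSpace ℝ (Fin d) × ℝ) → ℝ)
    (hμD : ∀ p, μD p = (fun i : Fin (n + 1) => k p (pts i)) ⬝ᵥ Δ⁻¹ *ᵥ y)
    (hμDt : ∀ p, μDt p =
      (fun j : Fin n => k p (pts j.succ)) ⬝ᵥ Δt⁻¹ *ᵥ (fun j : Fin n => y j.succ))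
    (a : ℝ) (ha : a = E * y 0 + G ⬝ᵥ (fun j : Fin n => y j.succ))
    (b : Fin n → ℝ)
    (hb : b = y 0 • H + (fun j : Fin n => y j.succ) ᵥ* (F - Δt⁻¹))
    (convS : EuclideanSpace ℝ (Fin d) → ℝ)
    (hconvS : ∀ v, convS v = ∫ u : EuclideanSpace ℝ (Fin d), kS ‖u‖ * kS ‖v - u‖)
    (convT : ℝ → ℝ → ℝ)
    (hconvT : ∀ a' s, convT a' s = ∫ τ in Set.Ioi a', kT |τ| * kT |s - τ|)
    (hintS : ∀ v : EuclideanSpace ℝ (Fin d),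
      Integrable (fun u : EuclideanSpace ℝ (Fin d) => kS ‖u‖ * kS ‖v - u‖))
    (hintT : ∀ a' s : ℝ, IntegrableOn (fun τ => kT |τ| * kT |s - τ|) (Set.Ioi a'))
    (t0 : ℝ) (S : Set (EuclideanSpace ℝ (Fin d))) (hS : MeasurableSet S)
    (C : Matrix (Fin (n + 1)) (Fin (n + 1)) ℝ)
    (hC : ∀ i j, C i j =
      convS ((pts j).1 - (pts i).1) * convT (t0 - (pts i).2) ((pts j).2 - (pts i).2)) :
    (∫ x in S, ∫ t in Set.Ioi t0, (μD (x, t) - μDt (x, t)) ^ 2)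
      ≤ lam ^ 2 * a ^ 2 * C 0 0 +
        2 * lam ^ 2 * a * ∑ j : Fin n, b j * C 0 j.succ +
        lam ^ 2 * ∑ i : Fin n, ∑ j : Fin n, b i * b j * C i.succ j.succ :=
  stmt_6_general d n lam sig kS kT hkS0 hkT0 k hk pts y Δ hΔ hPD Δt hΔt k1 hk1 E hE F hF G hG H hH
    μD μDt hμD hμDt a ha b hb convS hconvS convT hconvT hintS hintT t0 S C hC
end

section
/- The squared difference of posterior standard deviations integrated over the domain of future predictions satisfies ∫_S ∫_{t₀}^{+∞} (σ_D(x,t) − σ_D̃(x,t))² dt dx ≤ λ²·E·C₁₁ + λ²·Σ_{j=2}^{n} c_j·C_{1j} + λ²·Σ_{i=2}^{n} Σ_{j=2}^{n} M_{ij}·C_{ij}, where c ∈ ℝ^{n−1} is defined by cᵀ = G + Hᵀ and M = F − Δ̃⁻¹. -/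
open Matrix MeasureTheory

/-!
With `r = Δ̃⁻¹ k₁` and `q = (1, -r)`, inverting `Δ` blockwise through the Schur complement
`E⁻¹ = λ + σ² - k₁ᵀ r` of its first entry gives `σ²_D̃ - σ²_D = E (qᵀκ)²`. As
`(√u - √v)² ≤ v - u` for `u ≤ v`, the integrand is at most `E (qᵀκ)²`, a quadratic form in the
separable functions `k_S(‖x - x_i‖) k_T(|t - t_i|)`. Integrating over `t > t₀` and then over all
of `ℝ^d ⊇ S`, each product integrates, after a translation, to the convolution entry `C_ij`, so
the bound is `λ² E qᵀ C q`. Sherman–Morrison gives `F = Δ̃⁻¹ + E r rᵀ` and `G = H = -E r`, which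
rewrites `E qᵀ C q` as the stated right-hand side.
-/

/-- No sign condition on `u` is needed because `√u = 0` for `u ≤ 0`. -/
theorem Real.sq_sqrt_sub_sqrt_le {u v : ℝ} (h : u ≤ v) : (√u - √v) ^ 2 ≤ v - u := by
  rcases le_or_gt 0 u with hu | hu
  · have hsq : √u * √u ≤ √u * √v :=
      mul_le_mul_of_nonneg_left (Real.sqrt_le_sqrt h) (Real.sqrt_nonneg u)
    nlinarith [Real.mul_self_sqrt hu, Real.mul_self_sqrt (hu.trans h)]
  · rw [Real.sqrt_eq_zero_of_nonpos hu.le, zero_sub, neg_sq]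
    rcases le_or_gt 0 v with hv | hv
    · rw [Real.sq_sqrt hv]; linarith
    · rw [Real.sqrt_eq_zero_of_nonpos hv.le]; linarith

namespace Matrix

theorem inv_sub_smul_vecMulVec_self_s7 {ι K : Type*} [Fintype ι] [DecidableEq ι] [Field K]
    {B : Matrix ι ι K} (hB : IsUnit B.det) (hBs : B.IsSymm) (b : ι → K) {α : K} (hα : α ≠ 0)
    (hs : α - b ⬝ᵥ B⁻¹ *ᵥ b ≠ 0) :
    (B - α⁻¹ • vecMulVec b b)⁻¹ =
      B⁻¹ + (α - b ⬝ᵥ B⁻¹ *ᵥ b)⁻¹ • vecMulVec (B⁻¹ *ᵥ b) (B⁻¹ *ᵥ b) := by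
  set r := B⁻¹ *ᵥ b
  set s := b ⬝ᵥ r
  have hBr : B *ᵥ r = b := by rw [mulVec_mulVec, mul_nonsing_inv _ hB, one_mulVec]
  have hr : b ᵥ* B⁻¹ = r := by rw [← mulVec_transpose, hBs.inv]
  have hcoef : (α - s)⁻¹ - α⁻¹ - α⁻¹ * ((α - s)⁻¹ * s) = 0 := by field_simp; ring
  apply inv_eq_right_inv
  simp only [sub_mul, mul_add, mul_nonsing_inv _ hB, Matrix.mul_smul, Matrix.smul_mul,
    mul_vecMulVec, hBr, vecMulVec_mul, hr, smul_mulVec, vecMulVec_mulVec, op_smul_eq_smul,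
    smul_vecMulVec]
  linear_combination (norm := module) hcoef • vecMulVec b r

variable {n : ℕ}

theorem IsSymm.sum_sum_vecCons_mul {R : Type*} [CommRing R]
    {C : Matrix (Fin (n + 1)) (Fin (n + 1)) R} (hC : C.IsSymm) (x : R) (y : Fin n → R) :
    ∑ i, ∑ j, vecCons x y i * vecCons x y j * C i j =
      x * x * C 0 0 + ∑ j, 2 * x * y j * C 0 j.succ + ∑ i, ∑ j, y i * y j * C i.succ j.succ := by
  simp only [Fin.sum_univ_succ, cons_val_zero, cons_val_succ, hC.apply 0, Finset.sum_add_distrib]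
  have hcross : ∑ j, 2 * x * y j * C 0 j.succ =
      ∑ j, x * y j * C 0 j.succ + ∑ j, y j * x * C 0 j.succ := by
    rw [← Finset.sum_add_distrib]
    exact Finset.sum_congr rfl fun j _ => by ring
  rw [hcross]
  ring

theorem IsSymm.mulVec_vecCons {R : Type*} [CommRing R] {A : Matrix (Fin (n + 1)) (Fin (n + 1)) R}
    (hA : A.IsSymm) {B : Matrix (Fin n) (Fin n) R} (hB : A.submatrix Fin.succ Fin.succ = B)
    {b : Fin n → R} (hb : ∀ j, A 0 j.succ = b j) (x : R) (y : Fin n → R) :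
    A *ᵥ vecCons x y = vecCons (A 0 0 * x + b ⬝ᵥ y) (x • b + B *ᵥ y) := by
  subst hB
  ext i
  refine Fin.cases ?_ (fun i => ?_) i
  · simp [mulVec, dotProduct, Fin.sum_univ_succ, hb]
  · simp [mulVec, dotProduct, Fin.sum_univ_succ, ← hb, hA.apply, mul_comm]

namespace PosDef

variable {A : Matrix (Fin (n + 1)) (Fin (n + 1)) ℝ} {B : Matrix (Fin n) (Fin n) ℝ} {b : Fin n → ℝ}

theorem mulVec_vecCons_one_neg (hA : A.PosDef) (hB : A.submatrix Fin.succ Fin.succ = B)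
    (hb : ∀ j, A 0 j.succ = b j) :
    A *ᵥ vecCons 1 (-(B⁻¹ *ᵥ b)) = vecCons (A 0 0 - b ⬝ᵥ B⁻¹ *ᵥ b) 0 := by
  have hBu : IsUnit B.det := (hB ▸ hA.submatrix (Fin.succ_injective n)).det_pos.ne'.isUnit
  rw [(isHermitian_iff_isSymm.mp hA.1).mulVec_vecCons hB hb, mulVec_neg, mulVec_mulVec,
    mul_nonsing_inv _ hBu, one_mulVec, one_smul, add_neg_cancel, dotProduct_neg, mul_one,
    ← sub_eq_add_neg]

theorem dotProduct_inv_mulVec_lt (hA : A.PosDef) (hB : A.submatrix Fin.succ Fin.succ = B)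
    (hb : ∀ j, A 0 j.succ = b j) : b ⬝ᵥ B⁻¹ *ᵥ b < A 0 0 := by
  have hq : vecCons 1 (-(B⁻¹ *ᵥ b)) ≠ 0 := fun h => by simpa using congrFun h 0
  have := hA.dotProduct_mulVec_pos hq
  rw [star_trivial, hA.mulVec_vecCons_one_neg hB hb, cons_dotProduct_cons] at this
  simpa using this

theorem dotProduct_inv_mulVec_eq (hA : A.PosDef) (hB : A.submatrix Fin.succ Fin.succ = B)
    (hb : ∀ j, A 0 j.succ = b j) (κ : Fin (n + 1) → ℝ) :
    κ ⬝ᵥ A⁻¹ *ᵥ κ = vecTail κ ⬝ᵥ B⁻¹ *ᵥ vecTail κ +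
      (A 0 0 - b ⬝ᵥ B⁻¹ *ᵥ b)⁻¹ * (vecCons 1 (-(B⁻¹ *ᵥ b)) ⬝ᵥ κ) ^ 2 := by
  have hBpd : B.PosDef := hB ▸ hA.submatrix (Fin.succ_injective n)
  set u := B⁻¹ *ᵥ vecTail κ
  set q := vecCons 1 (-(B⁻¹ *ᵥ b))
  set w := q ⬝ᵥ κ with hw
  set e := (A 0 0 - b ⬝ᵥ B⁻¹ *ᵥ b)⁻¹
  have he : e * (A 0 0 - b ⬝ᵥ B⁻¹ *ᵥ b) = 1 :=
    inv_mul_cancel₀ (sub_ne_zero.mpr (hA.dotProduct_inv_mulVec_lt hB hb).ne')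
  have hBu : B *ᵥ u = vecTail κ := by
    rw [mulVec_mulVec, mul_nonsing_inv _ hBpd.det_pos.ne'.isUnit, one_mulVec]
  have hw' : w = κ 0 - b ⬝ᵥ u := by
    rw [hw, cons_dotProduct, one_mul, neg_dotProduct, dotProduct_mulVec, ← mulVec_transpose,
      (isHermitian_iff_isSymm.mp hBpd.1).inv, ← sub_eq_add_neg]
    rfl
  have hsolve : A *ᵥ (vecCons 0 u + (e * w) • q) = κ := by
    rw [mulVec_add, mulVec_smul, hA.mulVec_vecCons_one_neg hB hb,
      (isHermitian_iff_isSymm.mp hA.1).mulVec_vecCons hB hb, hBu]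
    ext i
    refine Fin.cases ?_ (fun i => ?_) i
    · simp only [Pi.add_apply, Pi.smul_apply, cons_val_zero, smul_eq_mul]
      linear_combination w * he + hw'
    · simp [vecTail]
  have hinv : A⁻¹ *ᵥ κ = vecCons 0 u + (e * w) • q := by
    rw [← hsolve, mulVec_mulVec, nonsing_inv_mul _ hA.det_pos.ne'.isUnit, one_mulVec]
  rw [hinv, dotProduct_add, dotProduct_smul, dotProduct_cons, smul_eq_mul, dotProduct_comm κ q,
    ← hw]
  ring

theorem sq_sqrt_sub_sqrt_le (hA : A.PosDef) (hB : A.submatrix Fin.succ Fin.succ = B)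
    (hb : ∀ j, A 0 j.succ = b j) (c : ℝ) (κ : Fin (n + 1) → ℝ) :
    (√(c - κ ⬝ᵥ A⁻¹ *ᵥ κ) - √(c - vecTail κ ⬝ᵥ B⁻¹ *ᵥ vecTail κ)) ^ 2 ≤
      (A 0 0 - b ⬝ᵥ B⁻¹ *ᵥ b)⁻¹ * (vecCons 1 (-(B⁻¹ *ᵥ b)) ⬝ᵥ κ) ^ 2 := by
  have hnonneg : 0 ≤ (A 0 0 - b ⬝ᵥ B⁻¹ *ᵥ b)⁻¹ * (vecCons 1 (-(B⁻¹ *ᵥ b)) ⬝ᵥ κ) ^ 2 :=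
    mul_nonneg (inv_nonneg.mpr (sub_nonneg.mpr (hA.dotProduct_inv_mulVec_lt hB hb).le))
      (sq_nonneg _)
  have hquad := hA.dotProduct_inv_mulVec_eq hB hb κ
  calc _ ≤ (c - vecTail κ ⬝ᵥ B⁻¹ *ᵥ vecTail κ) - (c - κ ⬝ᵥ A⁻¹ *ᵥ κ) :=
        Real.sq_sqrt_sub_sqrt_le (by linarith)
    _ = _ := by rw [hquad]; ring

theorem mul_sum_sum_vecCons_mul_eq (hA : A.PosDef) (hB : A.submatrix Fin.succ Fin.succ = B)
    (hb : ∀ j, A 0 j.succ = b j) {E : ℝ} (hE : E = (A 0 0 - b ⬝ᵥ B⁻¹ *ᵥ b)⁻¹)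
    {F : Matrix (Fin n) (Fin n) ℝ} (hF : F = (B - (A 0 0)⁻¹ • vecMulVec b b)⁻¹)
    {C : Matrix (Fin (n + 1)) (Fin (n + 1)) ℝ} (hC : C.IsSymm) :
    E * ∑ i, ∑ j, vecCons 1 (-(B⁻¹ *ᵥ b)) i * vecCons 1 (-(B⁻¹ *ᵥ b)) j * C i j =
      E * C 0 0 + ∑ j, (-(E • (b ᵥ* B⁻¹)) + -((A 0 0)⁻¹ • (F *ᵥ b))) j * C 0 j.succ +
        ∑ i, ∑ j, (F - B⁻¹) i j * C i.succ j.succ := by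
  have hBpd : B.PosDef := hB ▸ hA.submatrix (Fin.succ_injective n)
  have hlt := hA.dotProduct_inv_mulVec_lt hB hb
  set r := B⁻¹ *ᵥ b
  have hF' : F = B⁻¹ + E • vecMulVec r r := by
    rw [hF, hE]
    exact inv_sub_smul_vecMulVec_self_s7 hBpd.det_pos.ne'.isUnit
      (isHermitian_iff_isSymm.mp hBpd.1) b hA.diag_pos.ne' (sub_ne_zero.mpr hlt.ne')
  have hr : b ᵥ* B⁻¹ = r := by
    rw [← mulVec_transpose, isHermitian_iff_isSymm.mp hBpd.inv.1]
  have hscal : 1 + E * (b ⬝ᵥ r) = A 0 0 * E := by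
    rw [hE]
    field_simp [(sub_pos.mpr hlt).ne']
    ring
  have hFb : F *ᵥ b = (A 0 0 * E) • r := by
    rw [hF', add_mulVec, smul_mulVec, vecMulVec_mulVec, op_smul_eq_smul, smul_smul,
      dotProduct_comm, ← hscal, add_smul, one_smul]
  have hc : -(E • r) + -((A 0 0)⁻¹ • (A 0 0 * E) • r) = (-2 * E) • r := by
    rw [smul_smul, inv_mul_cancel_left₀ hA.diag_pos.ne']
    module
  rw [hC.sum_sum_vecCons_mul, hr, hFb, hc, hF', add_sub_cancel_left, mul_add, mul_add,
    Finset.mul_sum, Finset.mul_sum]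
  congr 1
  congr 1
  · ring
  · exact Finset.sum_congr rfl fun j _ => by
      simp only [Pi.neg_apply, Pi.smul_apply, smul_eq_mul]; ring
  · refine Finset.sum_congr rfl fun i _ => ?_
    rw [Finset.mul_sum]
    exact Finset.sum_congr rfl fun j _ => by
      simp only [Pi.neg_apply, Matrix.smul_apply, vecMulVec_apply, smul_eq_mul]; ring

end PosDef

end Matrix

theorem comp_sub_mul_norm_sub_eq {E : Type*} [SeminormedAddCommGroup E] (f : ℝ → ℝ) (a b : E) :
    (fun x => f ‖x - a‖ * f ‖x - b‖) = (fun u => f ‖u‖ * f ‖b - a - u‖) ∘ (· - a) := by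
  funext x
  simp [sub_sub_sub_cancel_right, norm_sub_rev b x]

namespace MeasureTheory

theorem setIntegral_integral_le_sum_integral_mul_integral
    {ι X T : Type*} [Fintype ι] [MeasurableSpace X] [MeasurableSpace T]
    {μ : Measure X} {ν : Measure T} (S : Set X) {f : X → T → ℝ} {G : ι → X → ℝ}
    {H : ι → T → ℝ} (hG : ∀ k, Integrable (G k) μ) (hH : ∀ k, Integrable (H k) ν)
    (hf₀ : ∀ x t, 0 ≤ f x t) (hf : ∀ x t, f x t ≤ ∑ k, G k x * H k t) :
    ∫ x in S, ∫ t, f x t ∂ν ∂μ ≤ ∑ k, (∫ x, G k x ∂μ) * ∫ t, H k t ∂ν := by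
  set J : X → ℝ := fun x => ∑ k, G k x * ∫ t, H k t ∂ν
  have hJ : Integrable J μ := integrable_finsetSum _ fun k _ => (hG k).mul_const _
  have hfJ : ∀ x, ∫ t, f x t ∂ν ≤ J x := fun x => by
    have hint : ∫ t, ∑ k, G k x * H k t ∂ν = J x := by
      rw [integral_finsetSum _ fun k _ => (hH k).const_mul _]
      simp_rw [integral_const_mul]
      rfl
    exact hint ▸ integral_mono_of_nonneg (ae_of_all _ (hf₀ x))
      (integrable_finsetSum _ fun k _ => (hH k).const_mul _) (ae_of_all _ (hf x))
  calc ∫ x in S, ∫ t, f x t ∂ν ∂μ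
      ≤ ∫ x in S, J x ∂μ := integral_mono_of_nonneg
        (ae_of_all _ fun x => integral_nonneg (hf₀ x)) hJ.integrableOn (ae_of_all _ hfJ)
    _ ≤ ∫ x, J x ∂μ := setIntegral_le_integral hJ
        (ae_of_all _ fun x => (integral_nonneg (hf₀ x)).trans (hfJ x))
    _ = ∑ k, (∫ x, G k x ∂μ) * ∫ t, H k t ∂ν := by
      rw [integral_finsetSum _ fun k _ => (hG k).mul_const _]
      simp_rw [integral_mul_const]

theorem setIntegral_integral_le_mul_sum_sum
    {ι X T : Type*} [Fintype ι] [MeasurableSpace X] [MeasurableSpace T]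
    {μ : Measure X} {ν : Measure T} (S : Set X) {f : X → T → ℝ} (e : ℝ) (q : ι → ℝ)
    {g : ι → X → ℝ} {h : ι → T → ℝ} (hg : ∀ i j, Integrable (fun x => g i x * g j x) μ)
    (hh : ∀ i j, Integrable (fun t => h i t * h j t) ν)
    (hf₀ : ∀ x t, 0 ≤ f x t) (hf : ∀ x t, f x t ≤ e * (∑ i, q i * (g i x * h i t)) ^ 2) :
    ∫ x in S, ∫ t, f x t ∂ν ∂μ ≤
      e * ∑ i, ∑ j, q i * q j * ((∫ x, g i x * g j x ∂μ) * ∫ t, h i t * h j t ∂ν) := by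
  have hexpand : ∀ x t, e * (∑ i, q i * (g i x * h i t)) ^ 2 = ∑ ij : ι × ι,
      e * q ij.1 * q ij.2 * (g ij.1 x * g ij.2 x) * (h ij.1 t * h ij.2 t) := fun x t => by
    rw [sq, Finset.sum_mul_sum, Fintype.sum_prod_type, Finset.mul_sum]
    refine Finset.sum_congr rfl fun i _ => ?_
    rw [Finset.mul_sum]
    exact Finset.sum_congr rfl fun j _ => by ring
  refine (setIntegral_integral_le_sum_integral_mul_integral S
    (fun ij : ι × ι => (hg ij.1 ij.2).const_mul (e * q ij.1 * q ij.2))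
    (fun ij => hh ij.1 ij.2) hf₀ fun x t => (hf x t).trans_eq (hexpand x t)).trans_eq ?_
  simp only [integral_const_mul, Fintype.sum_prod_type, Finset.mul_sum]
  exact Finset.sum_congr rfl fun i _ => Finset.sum_congr rfl fun j _ => by ring

section Translation

variable {E : Type*} [NormedAddCommGroup E] [MeasurableSpace E] [MeasurableAdd E]
  (μ : Measure E) [μ.IsAddRightInvariant] (f : ℝ → ℝ) (s : Set E) (a b : E)

theorem integrableOn_preimage_sub_mul_norm_sub_iff :
    IntegrableOn (fun x => f ‖x - a‖ * f ‖x - b‖) ((· - a) ⁻¹' s) μ ↔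
      IntegrableOn (fun u => f ‖u‖ * f ‖b - a - u‖) s μ := by
  rw [comp_sub_mul_norm_sub_eq]
  exact (measurePreserving_sub_right μ a).integrableOn_comp_preimage
    (measurableEmbedding_subRight a)

theorem setIntegral_preimage_sub_mul_norm_sub :
    ∫ x in (· - a) ⁻¹' s, f ‖x - a‖ * f ‖x - b‖ ∂μ = ∫ u in s, f ‖u‖ * f ‖b - a - u‖ ∂μ := by
  rw [comp_sub_mul_norm_sub_eq]
  exact (measurePreserving_sub_right μ a).setIntegral_preimage_emb
    (measurableEmbedding_subRight a) (fun u => f ‖u‖ * f ‖b - a - u‖) s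

theorem integrable_mul_norm_sub_iff :
    Integrable (fun x => f ‖x - a‖ * f ‖x - b‖) μ ↔
      Integrable (fun u => f ‖u‖ * f ‖b - a - u‖) μ := by
  simpa using integrableOn_preimage_sub_mul_norm_sub_iff μ f Set.univ a b

theorem integral_mul_norm_sub :
    ∫ x, f ‖x - a‖ * f ‖x - b‖ ∂μ = ∫ u, f ‖u‖ * f ‖b - a - u‖ ∂μ := by
  simpa using setIntegral_preimage_sub_mul_norm_sub μ f Set.univ a b

end Translation

theorem integrableOn_Ioi_mul_abs_sub_iff (f : ℝ → ℝ) (t₀ a b : ℝ) :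
    IntegrableOn (fun t => f |t - a| * f |t - b|) (Set.Ioi t₀) ↔
      IntegrableOn (fun τ => f |τ| * f |b - a - τ|) (Set.Ioi (t₀ - a)) := by
  simpa only [Set.preimage_sub_const_Ioi, sub_add_cancel, Real.norm_eq_abs] using
    integrableOn_preimage_sub_mul_norm_sub_iff volume f (Set.Ioi (t₀ - a)) a b

theorem setIntegral_Ioi_mul_abs_sub (f : ℝ → ℝ) (t₀ a b : ℝ) :
    ∫ t in Set.Ioi t₀, f |t - a| * f |t - b| = ∫ τ in Set.Ioi (t₀ - a), f |τ| * f |b - a - τ| := by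
  simpa only [Set.preimage_sub_const_Ioi, sub_add_cancel, Real.norm_eq_abs] using
    setIntegral_preimage_sub_mul_norm_sub volume f (Set.Ioi (t₀ - a)) a b

end MeasureTheory

theorem stmt_7_general
    (d n : ℕ)
    (lam sig : ℝ)
    (kS kT : ℝ → ℝ)
    (hkS0 : kS 0 = 1) (hkT0 : kT 0 = 1)
    (k : (EuclideanSpace ℝ (Fin d) × ℝ) → (EuclideanSpace ℝ (Fin d) × ℝ) → ℝ)
    (hk : ∀ p q, k p q = lam * kS (‖p.1 - q.1‖) * kT (|p.2 - q.2|))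
    (pts : Fin (n + 1) → EuclideanSpace ℝ (Fin d) × ℝ)
    (Δ : Matrix (Fin (n + 1)) (Fin (n + 1)) ℝ)
    (hΔ : ∀ i j, Δ i j = k (pts i) (pts j) + sig ^ 2 * (if i = j then 1 else 0))
    (hPD : Δ.PosDef)
    (Δt : Matrix (Fin n) (Fin n) ℝ)
    (hΔt : Δt = Δ.submatrix Fin.succ Fin.succ)
    (k1 : Fin n → ℝ)
    (hk1 : ∀ j : Fin n, k1 j = k (pts 0) (pts j.succ))
    (E : ℝ) (hE : E = (lam + sig ^ 2 - k1 ⬝ᵥ Δt⁻¹ *ᵥ k1)⁻¹)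
    (F : Matrix (Fin n) (Fin n) ℝ)
    (hF : F = (Δt - (lam + sig ^ 2)⁻¹ • vecMulVec k1 k1)⁻¹)
    (G : Fin n → ℝ) (hG : G = -(E • (k1 ᵥ* Δt⁻¹)))
    (H : Fin n → ℝ) (hH : H = -((lam + sig ^ 2)⁻¹ • (F *ᵥ k1)))
    (σ2D σ2Dt : (EuclideanSpace ℝ (Fin d) × ℝ) → ℝ)
    (hσ2D : ∀ p, σ2D p = lam -
      (fun i : Fin (n + 1) => k p (pts i)) ⬝ᵥ Δ⁻¹ *ᵥ (fun i : Fin (n + 1) => k p (pts i)))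
    (hσ2Dt : ∀ p, σ2Dt p = lam -
      (fun j : Fin n => k p (pts j.succ)) ⬝ᵥ Δt⁻¹ *ᵥ (fun j : Fin n => k p (pts j.succ)))
    (σD σDt : (EuclideanSpace ℝ (Fin d) × ℝ) → ℝ)
    (hσD : ∀ p, σD p = Real.sqrt (σ2D p))
    (hσDt : ∀ p, σDt p = Real.sqrt (σ2Dt p))
    (c : Fin n → ℝ) (hc : c = G + H)
    (M : Matrix (Fin n) (Fin n) ℝ) (hM : M = F - Δt⁻¹)
    (convS : EuclideanSpace ℝ (Fin d) → ℝ)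
    (hconvS : ∀ v, convS v = ∫ u : EuclideanSpace ℝ (Fin d), kS ‖u‖ * kS ‖v - u‖)
    (convT : ℝ → ℝ → ℝ)
    (hconvT : ∀ a' s, convT a' s = ∫ τ in Set.Ioi a', kT |τ| * kT |s - τ|)
    (hintS : ∀ v : EuclideanSpace ℝ (Fin d),
      Integrable (fun u : EuclideanSpace ℝ (Fin d) => kS ‖u‖ * kS ‖v - u‖))
    (hintT : ∀ a' s : ℝ, IntegrableOn (fun τ => kT |τ| * kT |s - τ|) (Set.Ioi a'))
    (t0 : ℝ) (S : Set (EuclideanSpace ℝ (Fin d)))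
    (C : Matrix (Fin (n + 1)) (Fin (n + 1)) ℝ)
    (hC : ∀ i j, C i j =
      convS ((pts j).1 - (pts i).1) * convT (t0 - (pts i).2) ((pts j).2 - (pts i).2)) :
    (∫ x in S, ∫ t in Set.Ioi t0, (σD (x, t) - σDt (x, t)) ^ 2)
      ≤ lam ^ 2 * E * C 0 0 +
        lam ^ 2 * ∑ j : Fin n, c j * C 0 j.succ +
        lam ^ 2 * ∑ i : Fin n, ∑ j : Fin n, M i j * C i.succ j.succ := by
  have hΔ00 : Δ 0 0 = lam + sig ^ 2 := by simp [hΔ, hk, hkS0, hkT0]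
  have hb : ∀ j : Fin n, Δ 0 j.succ = k1 j := fun j => by
    simp [hΔ, hk1, (Fin.succ_ne_zero j).symm]
  set q : Fin (n + 1) → ℝ := vecCons 1 (-(Δt⁻¹ *ᵥ k1))
  rw [← hΔ00] at hE hF hH
  have hpt : ∀ x t, (σD (x, t) - σDt (x, t)) ^ 2 ≤
      lam ^ 2 * E * (∑ i, q i * (kS ‖x - (pts i).1‖ * kT |t - (pts i).2|)) ^ 2 := fun x t => by
    have hκ : (fun i => k (x, t) (pts i)) =
        lam • fun i => kS ‖x - (pts i).1‖ * kT |t - (pts i).2| := by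
      funext i
      simp only [hk, Pi.smul_apply, smul_eq_mul]
      ring
    rw [hσD, hσDt, hσ2D, hσ2Dt]
    refine (hPD.sq_sqrt_sub_sqrt_le hΔt.symm hb lam _).trans_eq ?_
    rw [← hE, hκ, dotProduct_smul, smul_eq_mul, dotProduct]
    ring
  have hCint : ∀ i j, C i j = (∫ x, kS ‖x - (pts i).1‖ * kS ‖x - (pts j).1‖) *
      ∫ t in Set.Ioi t0, kT |t - (pts i).2| * kT |t - (pts j).2| := fun i j => by
    rw [hC, hconvS, hconvT, integral_mul_norm_sub, setIntegral_Ioi_mul_abs_sub]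
  have hCsymm : C.IsSymm := Matrix.ext fun i j => by simp only [transpose_apply, hCint, mul_comm]
  calc _ ≤ lam ^ 2 * E * ∑ i, ∑ j, q i * q j * ((∫ x, kS ‖x - (pts i).1‖ * kS ‖x - (pts j).1‖) *
        ∫ t in Set.Ioi t0, kT |t - (pts i).2| * kT |t - (pts j).2|) :=
        setIntegral_integral_le_mul_sum_sum S _ q
          (fun i j => (integrable_mul_norm_sub_iff volume kS _ _).mpr (hintS _))
          (fun i j => (integrableOn_Ioi_mul_abs_sub_iff kT t0 _ _).mpr (hintT _ _))
          (fun _ _ => sq_nonneg _) hpt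
    _ = lam ^ 2 * (E * ∑ i, ∑ j, q i * q j * C i j) := by simp only [hCint]; ring
    _ = _ := by
        rw [hPD.mul_sum_sum_vecCons_mul_eq hΔt.symm hb hE hF hCsymm, hc, hG, hH, hM]
        ring

/-- Lemma 4 of the paper: integrated bound on the squared difference of posterior standard
deviations over the domain of future predictions. -/
theorem stmt_7
    (d n : ℕ) (hd : 1 ≤ d) (hn : 1 ≤ n)
    (lam sig : ℝ) (hlam : 0 < lam) (hsig : 0 < sig)
    (kS kT : ℝ → ℝ)
    (hkSmeas : Measurable kS) (hkTmeas : Measurable kT)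
    (hkSrange : ∀ r, kS r ∈ Set.Icc (0 : ℝ) 1) (hkTrange : ∀ r, kT r ∈ Set.Icc (0 : ℝ) 1)
    (hkS0 : kS 0 = 1) (hkT0 : kT 0 = 1)
    (k : (EuclideanSpace ℝ (Fin d) × ℝ) → (EuclideanSpace ℝ (Fin d) × ℝ) → ℝ)
    (hk : ∀ p q, k p q = lam * kS (‖p.1 - q.1‖) * kT (|p.2 - q.2|))
    (pts : Fin (n + 1) → EuclideanSpace ℝ (Fin d) × ℝ)
    (Δ : Matrix (Fin (n + 1)) (Fin (n + 1)) ℝ)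
    (hΔ : ∀ i j, Δ i j = k (pts i) (pts j) + sig ^ 2 * (if i = j then 1 else 0))
    (hPD : Δ.PosDef)
    (Δt : Matrix (Fin n) (Fin n) ℝ)
    (hΔt : Δt = Δ.submatrix Fin.succ Fin.succ)
    (k1 : Fin n → ℝ)
    (hk1 : ∀ j : Fin n, k1 j = k (pts 0) (pts j.succ))
    (E : ℝ) (hE : E = (lam + sig ^ 2 - k1 ⬝ᵥ Δt⁻¹ *ᵥ k1)⁻¹)
    (F : Matrix (Fin n) (Fin n) ℝ)
    (hF : F = (Δt - (lam + sig ^ 2)⁻¹ • vecMulVec k1 k1)⁻¹)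
    (G : Fin n → ℝ) (hG : G = -(E • (k1 ᵥ* Δt⁻¹)))
    (H : Fin n → ℝ) (hH : H = -((lam + sig ^ 2)⁻¹ • (F *ᵥ k1)))
    (σ2D σ2Dt : (EuclideanSpace ℝ (Fin d) × ℝ) → ℝ)
    (hσ2D : ∀ p, σ2D p = lam -
      (fun i : Fin (n + 1) => k p (pts i)) ⬝ᵥ Δ⁻¹ *ᵥ (fun i : Fin (n + 1) => k p (pts i)))
    (hσ2Dt : ∀ p, σ2Dt p = lam -
      (fun j : Fin n => k p (pts j.succ)) ⬝ᵥ Δt⁻¹ *ᵥ (fun j : Fin n => k p (pts j.succ)))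
    (hborder : ∀ p : EuclideanSpace ℝ (Fin d) × ℝ,
      (Matrix.fromBlocks
        (Matrix.of fun (_ : Fin 1) (_ : Fin 1) => lam)
        (Matrix.of fun (_ : Fin 1) (j : Fin (n + 1)) => k p (pts j))
        (Matrix.of fun (i : Fin (n + 1)) (_ : Fin 1) => k p (pts i))
        Δ).PosSemidef)
    (σD σDt : (EuclideanSpace ℝ (Fin d) × ℝ) → ℝ)
    (hσD : ∀ p, σD p = Real.sqrt (σ2D p))
    (hσDt : ∀ p, σDt p = Real.sqrt (σ2Dt p))
    (c : Fin n → ℝ) (hc : c = G + H)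
    (M : Matrix (Fin n) (Fin n) ℝ) (hM : M = F - Δt⁻¹)
    (convS : EuclideanSpace ℝ (Fin d) → ℝ)
    (hconvS : ∀ v, convS v = ∫ u : EuclideanSpace ℝ (Fin d), kS ‖u‖ * kS ‖v - u‖)
    (convT : ℝ → ℝ → ℝ)
    (hconvT : ∀ a' s, convT a' s = ∫ τ in Set.Ioi a', kT |τ| * kT |s - τ|)
    (hintS : ∀ v : EuclideanSpace ℝ (Fin d),
      Integrable (fun u : EuclideanSpace ℝ (Fin d) => kS ‖u‖ * kS ‖v - u‖))
    (hintT : ∀ a' s : ℝ, IntegrableOn (fun τ => kT |τ| * kT |s - τ|) (Set.Ioi a'))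
    (t0 : ℝ) (S : Set (EuclideanSpace ℝ (Fin d))) (hS : MeasurableSet S)
    (C : Matrix (Fin (n + 1)) (Fin (n + 1)) ℝ)
    (hC : ∀ i j, C i j =
      convS ((pts j).1 - (pts i).1) * convT (t0 - (pts i).2) ((pts j).2 - (pts i).2)) :
    (∫ x in S, ∫ t in Set.Ioi t0, (σD (x, t) - σDt (x, t)) ^ 2)
      ≤ lam ^ 2 * E * C 0 0 +
        lam ^ 2 * ∑ j : Fin n, c j * C 0 j.succ +
        lam ^ 2 * ∑ i : Fin n, ∑ j : Fin n, M i j * C i.succ j.succ :=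
  stmt_7_general d n lam sig kS kT hkS0 hkT0 k hk pts Δ hΔ hPD Δt hΔt k1 hk1 E hE F hF G hG H hH σ2D
    σ2Dt hσ2D hσ2Dt σD σDt hσD hσDt c hc M hM convS hconvS convT hconvT hintS hintT t0 S C hC
end

section
/- The squared posterior mean integrated over the domain of future predictions satisfies ∫_S ∫_{t₀}^{+∞} μ_D(x,t)² dt dx ≤ λ²·yᵀΔ⁻¹ C Δ⁻¹ y, where C is the n×n matrix with entries C_{ij} = (k_S⋆k_S)(x_j − x_i)·(k_T⋆k_T)_{t₀−t_i}^{+∞}(t_j − t_i). -/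
open Matrix MeasureTheory

/-- Integrated bound on the squared posterior mean over the domain of future predictions:
`∫∫ μ_D² ≤ λ²·yᵀΔ⁻¹CΔ⁻¹y`. -/
theorem stmt_8
    (d n : ℕ) (hd : 1 ≤ d) (hn : 1 ≤ n)
    (lam sig : ℝ) (hlam : 0 < lam) (hsig : 0 < sig)
    (kS kT : ℝ → ℝ)
    (hkSmeas : Measurable kS) (hkTmeas : Measurable kT)
    (hkSrange : ∀ r, kS r ∈ Set.Icc (0 : ℝ) 1) (hkTrange : ∀ r, kT r ∈ Set.Icc (0 : ℝ) 1)
    (hkS0 : kS 0 = 1) (hkT0 : kT 0 = 1)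
    (k : (EuclideanSpace ℝ (Fin d) × ℝ) → (EuclideanSpace ℝ (Fin d) × ℝ) → ℝ)
    (hk : ∀ p q, k p q = lam * kS (‖p.1 - q.1‖) * kT (|p.2 - q.2|))
    (pts : Fin n → EuclideanSpace ℝ (Fin d) × ℝ)
    (y : Fin n → ℝ)
    (Δ : Matrix (Fin n) (Fin n) ℝ)
    (hΔ : ∀ i j, Δ i j = k (pts i) (pts j) + sig ^ 2 * (if i = j then 1 else 0))
    (hPD : Δ.PosDef)
    (μD : (EuclideanSpace ℝ (Fin d) × ℝ) → ℝ)
    (hμD : ∀ p, μD p = (fun i : Fin n => k p (pts i)) ⬝ᵥ Δ⁻¹ *ᵥ y)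
    (convS : EuclideanSpace ℝ (Fin d) → ℝ)
    (hconvS : ∀ v, convS v = ∫ u : EuclideanSpace ℝ (Fin d), kS ‖u‖ * kS ‖v - u‖)
    (convT : ℝ → ℝ → ℝ)
    (hconvT : ∀ a' s, convT a' s = ∫ τ in Set.Ioi a', kT |τ| * kT |s - τ|)
    (hintS : ∀ v : EuclideanSpace ℝ (Fin d),
      Integrable (fun u : EuclideanSpace ℝ (Fin d) => kS ‖u‖ * kS ‖v - u‖))
    (hintT : ∀ a' s : ℝ, IntegrableOn (fun τ => kT |τ| * kT |s - τ|) (Set.Ioi a'))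
    (t0 : ℝ) (S : Set (EuclideanSpace ℝ (Fin d))) (hS : MeasurableSet S)
    (C : Matrix (Fin n) (Fin n) ℝ)
    (hC : ∀ i j, C i j =
      convS ((pts j).1 - (pts i).1) * convT (t0 - (pts i).2) ((pts j).2 - (pts i).2)) :
    (∫ x in S, ∫ t in Set.Ioi t0, (μD (x, t)) ^ 2)
      ≤ lam ^ 2 * (y ⬝ᵥ (Δ⁻¹ * C * Δ⁻¹) *ᵥ y) := by
  classical
  set α : Fin n → ℝ := Δ⁻¹ *ᵥ y with hα
  -- expansion of the posterior mean
  have hμ : ∀ (x : EuclideanSpace ℝ (Fin d)) (t : ℝ), μD (x, t)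
      = ∑ i, (lam * kS ‖x - (pts i).1‖ * kT |t - (pts i).2|) * α i := by
    intro x t
    rw [hμD]
    simp only [dotProduct]
    refine Finset.sum_congr rfl fun i _ => ?_
    rw [hk]
  have hsq : ∀ (x : EuclideanSpace ℝ (Fin d)) (t : ℝ), (μD (x, t)) ^ 2
      = ∑ i, ∑ j, (lam ^ 2 * α i * α j * (kS ‖x - (pts i).1‖ * kS ‖x - (pts j).1‖))
          * (kT |t - (pts i).2| * kT |t - (pts j).2|) := by
    intro x t
    rw [hμ, sq, Finset.sum_mul_sum]
    exact Finset.sum_congr rfl fun i _ => Finset.sum_congr rfl fun j _ => by ring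
  -- time-direction translation
  have hptT : ∀ (i j : Fin n) (t : ℝ),
      (Set.Ioi (t0 - (pts i).2)).indicator
          (fun τ => kT |τ| * kT |((pts j).2 - (pts i).2) - τ|) (t - (pts i).2)
        = (Set.Ioi t0).indicator
            (fun t => kT |t - (pts i).2| * kT |t - (pts j).2|) t := by
    intro i j t
    by_cases ht : t0 < t
    · have h4 : t0 - (pts i).2 < t - (pts i).2 := by linarith
      simp only [Set.indicator, Set.mem_Ioi, if_pos h4, if_pos ht]
      have harg : ((pts j).2 - (pts i).2) - (t - (pts i).2) = -(t - (pts j).2) := by ring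
      rw [harg, abs_neg]
    · have h4 : ¬ (t0 - (pts i).2 < t - (pts i).2) := by intro h; exact ht (by linarith)
      simp only [Set.indicator, Set.mem_Ioi, if_neg h4, if_neg ht]
  have htInt : ∀ i j : Fin n,
      IntegrableOn (fun t => kT |t - (pts i).2| * kT |t - (pts j).2|) (Set.Ioi t0) := by
    intro i j
    have h1 : Integrable ((Set.Ioi (t0 - (pts i).2)).indicator
        (fun τ => kT |τ| * kT |((pts j).2 - (pts i).2) - τ|)) :=
      (integrable_indicator_iff measurableSet_Ioi).2 (hintT _ _)
    have h2 := h1.comp_sub_right ((pts i).2)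
    rw [← integrable_indicator_iff measurableSet_Ioi]
    exact h2.congr (Filter.Eventually.of_forall fun t => hptT i j t)
  have htEq : ∀ i j : Fin n,
      (∫ t in Set.Ioi t0, kT |t - (pts i).2| * kT |t - (pts j).2|)
        = convT (t0 - (pts i).2) ((pts j).2 - (pts i).2) := by
    intro i j
    rw [hconvT, ← integral_indicator measurableSet_Ioi, ← integral_indicator measurableSet_Ioi,
      ← integral_sub_right_eq_self ((Set.Ioi (t0 - (pts i).2)).indicator
        (fun τ => kT |τ| * kT |((pts j).2 - (pts i).2) - τ|)) ((pts i).2)]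
    exact integral_congr_ae (Filter.Eventually.of_forall fun t => (hptT i j t).symm)
  -- space-direction translation
  have hptS : ∀ (i j : Fin n) (x : EuclideanSpace ℝ (Fin d)),
      kS ‖x - (pts i).1‖ * kS ‖((pts j).1 - (pts i).1) - (x - (pts i).1)‖
        = kS ‖x - (pts i).1‖ * kS ‖x - (pts j).1‖ := by
    intro i j x
    have hv : ((pts j).1 - (pts i).1) - (x - (pts i).1) = (pts j).1 - x := by abel
    rw [hv, norm_sub_rev ((pts j).1) x]
  have hxInt : ∀ i j : Fin n, Integrable (fun x : EuclideanSpace ℝ (Fin d) =>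
      kS ‖x - (pts i).1‖ * kS ‖x - (pts j).1‖) := by
    intro i j
    have h2 := (hintS ((pts j).1 - (pts i).1)).comp_sub_right ((pts i).1)
    exact h2.congr (Filter.Eventually.of_forall fun x => hptS i j x)
  have hxEq : ∀ i j : Fin n,
      (∫ x : EuclideanSpace ℝ (Fin d), kS ‖x - (pts i).1‖ * kS ‖x - (pts j).1‖)
        = convS ((pts j).1 - (pts i).1) := by
    intro i j
    rw [hconvS, ← integral_sub_right_eq_self
      (fun u : EuclideanSpace ℝ (Fin d) => kS ‖u‖ * kS ‖((pts j).1 - (pts i).1) - u‖)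
      ((pts i).1)]
    exact integral_congr_ae (Filter.Eventually.of_forall fun x => (hptS i j x).symm)
  -- inner (time) integral of the squared mean
  have hB : ∀ (x : EuclideanSpace ℝ (Fin d)),
      (∫ t in Set.Ioi t0, (μD (x, t)) ^ 2)
        = ∑ i, ∑ j, (lam ^ 2 * α i * α j * (kS ‖x - (pts i).1‖ * kS ‖x - (pts j).1‖))
            * convT (t0 - (pts i).2) ((pts j).2 - (pts i).2) := by
    intro x
    have h1 : (∫ t in Set.Ioi t0, (μD (x, t)) ^ 2)
        = ∫ t in Set.Ioi t0, ∑ i, ∑ j,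
            (lam ^ 2 * α i * α j * (kS ‖x - (pts i).1‖ * kS ‖x - (pts j).1‖))
              * (kT |t - (pts i).2| * kT |t - (pts j).2|) :=
      integral_congr_ae (Filter.Eventually.of_forall fun t => hsq x t)
    rw [h1, integral_finset_sum _ (fun i _ =>
      integrable_finset_sum _ (fun j _ => (htInt i j).const_mul _))]
    refine Finset.sum_congr rfl fun i _ => ?_
    rw [integral_finset_sum _ (fun j _ => (htInt i j).const_mul _)]
    refine Finset.sum_congr rfl fun j _ => ?_
    rw [integral_const_mul, htEq i j]
  have hGint : Integrable (fun x : EuclideanSpace ℝ (Fin d) =>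
      ∑ i, ∑ j, (lam ^ 2 * α i * α j * (kS ‖x - (pts i).1‖ * kS ‖x - (pts j).1‖))
        * convT (t0 - (pts i).2) ((pts j).2 - (pts i).2)) := by
    refine integrable_finset_sum _ (fun i _ => integrable_finset_sum _ (fun j _ => ?_))
    exact ((hxInt i j).const_mul (lam ^ 2 * α i * α j)).mul_const _
  have hGnn : ∀ x : EuclideanSpace ℝ (Fin d),
      0 ≤ ∑ i, ∑ j, (lam ^ 2 * α i * α j * (kS ‖x - (pts i).1‖ * kS ‖x - (pts j).1‖))
        * convT (t0 - (pts i).2) ((pts j).2 - (pts i).2) := fun x =>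
    le_of_le_of_eq (integral_nonneg fun t => sq_nonneg _) (hB x)
  -- symmetry of Δ⁻¹
  have hΔsym : Δᵀ = Δ := by
    ext i j
    rw [Matrix.transpose_apply, hΔ, hΔ, hk, hk, norm_sub_rev, abs_sub_comm]
    rcases eq_or_ne i j with h | h
    · simp [h]
    · simp [h, h.symm]
  have hinv : (Δ⁻¹)ᵀ = Δ⁻¹ := by rw [Matrix.transpose_nonsing_inv, hΔsym]
  have hdv : y ⬝ᵥ (Δ⁻¹ * C * Δ⁻¹) *ᵥ y = α ⬝ᵥ (C *ᵥ α) := by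
    rw [hα, ← Matrix.mulVec_mulVec, ← Matrix.mulVec_mulVec,
      Matrix.dotProduct_mulVec]
    congr 1
    rw [← hinv, Matrix.vecMul_transpose, hinv]
  calc (∫ x in S, ∫ t in Set.Ioi t0, (μD (x, t)) ^ 2)
      = ∫ x in S, ∑ i, ∑ j,
          (lam ^ 2 * α i * α j * (kS ‖x - (pts i).1‖ * kS ‖x - (pts j).1‖))
            * convT (t0 - (pts i).2) ((pts j).2 - (pts i).2) :=
        integral_congr_ae (Filter.Eventually.of_forall fun x => hB x)
    _ ≤ ∫ x, ∑ i, ∑ j,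
          (lam ^ 2 * α i * α j * (kS ‖x - (pts i).1‖ * kS ‖x - (pts j).1‖))
            * convT (t0 - (pts i).2) ((pts j).2 - (pts i).2) :=
        setIntegral_le_integral hGint (Filter.Eventually.of_forall hGnn)
    _ = ∑ i, ∑ j, (lam ^ 2 * α i * α j * convS ((pts j).1 - (pts i).1))
          * convT (t0 - (pts i).2) ((pts j).2 - (pts i).2) := by
        rw [integral_finset_sum _ (fun i _ => integrable_finset_sum _ (fun j _ =>
          ((hxInt i j).const_mul (lam ^ 2 * α i * α j)).mul_const _))]
        refine Finset.sum_congr rfl fun i _ => ?_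
        rw [integral_finset_sum _ (fun j _ =>
          ((hxInt i j).const_mul (lam ^ 2 * α i * α j)).mul_const _)]
        refine Finset.sum_congr rfl fun j _ => ?_
        rw [integral_mul_const, integral_const_mul, hxEq i j]
    _ = lam ^ 2 * (y ⬝ᵥ (Δ⁻¹ * C * Δ⁻¹) *ᵥ y) := by
        rw [hdv]
        simp only [dotProduct, Matrix.mulVec, hC, Finset.mul_sum]
        exact Finset.sum_congr rfl fun i _ => Finset.sum_congr rfl fun j _ => by ring
end

section
/- The squared deviation of the posterior standard deviation from the prior standard deviation √λ, integrated over the domain of future predictions, satisfies ∫_S ∫_{t₀}^{+∞} (√λ − σ_D(x,t))² dt dx ≤ λ²·Tr(Δ⁻¹ C), where C is the n×n matrix with entries C_{ij} = (k_S⋆k_S)(x_j − x_i)·(k_T⋆k_T)_{t₀−t_i}^{+∞}(t_j − t_i). -/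
/-!
Because Δ⁻¹ is positive semidefinite, σ²_D = λ − q with q ≥ 0, and (√λ − √(λ − q))² ≤ q
pointwise. The kernel is separable, so q(x, t) is the quadratic form of λ²Δ⁻¹ evaluated at the
entrywise product g(x) ⊙ h(t) of the spatial and temporal kernel vectors. Integrating such a
form first in t and then in x replaces λ²Δ⁻¹ by its Hadamard product with the L² Gram matrices
of h on (t₀, ∞) and of g on ℝ^d; after a translation these Gram matrices are the two
convolution factors of C. Enlarging S to ℝ^d only increases the nonnegative integral.
-/

open Matrix MeasureTheory

theorem sq_sqrt_sub_sqrt_sub_le (a : ℝ) {b : ℝ} (hb : 0 ≤ b) : (√a - √(a - b)) ^ 2 ≤ b := by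
  have hle : √(a - b) ≤ √a := Real.sqrt_le_sqrt (by linarith)
  have hnn : 0 ≤ √(a - b) := Real.sqrt_nonneg _
  have hsq : √a ^ 2 - √(a - b) ^ 2 ≤ b := by
    rw [Real.sq_sqrt', Real.sq_sqrt']
    rcases le_total 0 a with ha | ha <;> rcases le_total 0 (a - b) with hab | hab <;>
      simp only [max_eq_left, max_eq_right, ha, hab] <;> linarith
  nlinarith

section IntegralGram

variable {ι X Y : Type*} [MeasurableSpace X] [MeasurableSpace Y] {μ : Measure X} {ν : Measure Y}

noncomputable def integralGram (μ : Measure X) (h : X → ι → ℝ) : Matrix ι ι ℝ :=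
  Matrix.of fun i j => ∫ x, h x i * h x j ∂μ

theorem integralGram_transpose (h : X → ι → ℝ) : (integralGram μ h)ᵀ = integralGram μ h := by
  ext i j
  simp only [integralGram, transpose_apply, of_apply, mul_comm]

variable [Fintype ι]

theorem dotProduct_mulVec_self_eq_sum {R : Type*} [CommSemiring R] (A : Matrix ι ι R)
    (v : ι → R) : v ⬝ᵥ A *ᵥ v = ∑ i, ∑ j, A i j * (v i * v j) := by
  simp only [dotProduct, mulVec, Finset.mul_sum]
  exact Finset.sum_congr rfl fun i _ => Finset.sum_congr rfl fun j _ => by ring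

theorem dotProduct_mul_mulVec_mul_eq_sum (A : Matrix ι ι ℝ) (u v : ι → ℝ) :
    (u * v) ⬝ᵥ A *ᵥ (u * v) = ∑ i, ∑ j, A i j * u i * u j * (v i * v j) := by
  rw [dotProduct_mulVec_self_eq_sum]
  exact Finset.sum_congr rfl fun i _ => Finset.sum_congr rfl fun j _ => by
    simp only [Pi.mul_apply]; ring

theorem integrable_dotProduct_mul_mulVec_mul (A : Matrix ι ι ℝ) (u : ι → ℝ) {h : X → ι → ℝ}
    (hh : ∀ i j, Integrable (fun x => h x i * h x j) μ) :
    Integrable (fun x => (u * h x) ⬝ᵥ A *ᵥ (u * h x)) μ := by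
  simp only [dotProduct_mul_mulVec_mul_eq_sum]
  exact integrable_finsetSum _ fun i _ => integrable_finsetSum _ fun j _ =>
    (hh i j).const_mul _

theorem integral_dotProduct_mul_mulVec_mul (A : Matrix ι ι ℝ) (u : ι → ℝ) {h : X → ι → ℝ}
    (hh : ∀ i j, Integrable (fun x => h x i * h x j) μ) :
    ∫ x, (u * h x) ⬝ᵥ A *ᵥ (u * h x) ∂μ = u ⬝ᵥ (A ⊙ integralGram μ h) *ᵥ u := by
  simp only [dotProduct_mul_mulVec_mul_eq_sum]
  rw [dotProduct_mulVec_self_eq_sum, integral_finsetSum _ fun i _ =>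
    integrable_finsetSum _ fun j _ => (hh i j).const_mul _]
  refine Finset.sum_congr rfl fun i _ => ?_
  rw [integral_finsetSum _ fun j _ => (hh i j).const_mul _]
  refine Finset.sum_congr rfl fun j _ => ?_
  rw [integral_const_mul, hadamard_apply, integralGram, of_apply]
  ring

theorem setIntegral_integral_le_trace_mul_integralGram {A : Matrix ι ι ℝ} (hA : A.PosSemidef)
    {g : X → ι → ℝ} {h : Y → ι → ℝ} (hg : ∀ i j, Integrable (fun x => g x i * g x j) μ)
    (hh : ∀ i j, Integrable (fun y => h y i * h y j) ν) {F : X → Y → ℝ}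
    (hF0 : ∀ x y, 0 ≤ F x y) (hF : ∀ x y, F x y ≤ (g x * h y) ⬝ᵥ A *ᵥ (g x * h y))
    (S : Set X) :
    ∫ x in S, ∫ y, F x y ∂ν ∂μ ≤ trace (A * (integralGram μ g ⊙ integralGram ν h)) := by
  have hQ0 : ∀ x y, 0 ≤ (g x * h y) ⬝ᵥ A *ᵥ (g x * h y) := fun x y => by
    simpa using hA.dotProduct_mulVec_nonneg (g x * h y)
  have hinner : (fun x => ∫ y, (g x * h y) ⬝ᵥ A *ᵥ (g x * h y) ∂ν)
      = fun x => (1 * g x) ⬝ᵥ (A ⊙ integralGram ν h) *ᵥ (1 * g x) := by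
    funext x
    rw [one_mul, integral_dotProduct_mul_mulVec_mul A _ hh]
  have hinner_int : Integrable (fun x => ∫ y, (g x * h y) ⬝ᵥ A *ᵥ (g x * h y) ∂ν) μ := by
    rw [hinner]
    exact integrable_dotProduct_mul_mulVec_mul _ 1 hg
  calc ∫ x in S, ∫ y, F x y ∂ν ∂μ
      ≤ ∫ x in S, ∫ y, (g x * h y) ⬝ᵥ A *ᵥ (g x * h y) ∂ν ∂μ :=
        integral_mono_of_nonneg (.of_forall fun x => integral_nonneg (hF0 x))
          hinner_int.integrableOn <| .of_forall fun x =>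
            integral_mono_of_nonneg (.of_forall (hF0 x))
              (integrable_dotProduct_mul_mulVec_mul A (g x) hh) (.of_forall (hF x))
    _ ≤ ∫ x, ∫ y, (g x * h y) ⬝ᵥ A *ᵥ (g x * h y) ∂ν ∂μ :=
        setIntegral_le_integral hinner_int (.of_forall fun x => integral_nonneg (hQ0 x))
    _ = 1 ⬝ᵥ (A ⊙ integralGram ν h ⊙ integralGram μ g) *ᵥ 1 := by
        rw [hinner, integral_dotProduct_mul_mulVec_mul _ 1 hg]
    _ = trace (A * (integralGram μ g ⊙ integralGram ν h)ᵀ) := by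
        rw [dotProduct_mulVec_self_eq_sum, hadamard_assoc, hadamard_comm (integralGram ν h),
          ← sum_hadamard_eq]
        simp
    _ = trace (A * (integralGram μ g ⊙ integralGram ν h)) := by
        rw [transpose_hadamard, integralGram_transpose, integralGram_transpose]

end IntegralGram

section Translation

variable {E : Type*} [NormedAddCommGroup E] [MeasurableSpace E] [MeasurableAdd E]
  {μ : Measure E} [μ.IsAddRightInvariant]

theorem integral_norm_sub_mul_norm_sub (k : ℝ → ℝ) (a b : E) :
    ∫ x, k ‖x - a‖ * k ‖x - b‖ ∂μ = ∫ u, k ‖u‖ * k ‖(b - a) - u‖ ∂μ := by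
  rw [← integral_sub_right_eq_self (fun u => k ‖u‖ * k ‖(b - a) - u‖) a]
  simp only [sub_sub_sub_cancel_right, norm_sub_rev b]

theorem integrable_norm_sub_mul_norm_sub {k : ℝ → ℝ} {a b : E}
    (hk : Integrable (fun u => k ‖u‖ * k ‖(b - a) - u‖) μ) :
    Integrable (fun x => k ‖x - a‖ * k ‖x - b‖) μ := by
  simpa only [sub_sub_sub_cancel_right, norm_sub_rev b] using hk.comp_sub_right a

end Translation

theorem integral_Ioi_abs_sub_mul_abs_sub (k : ℝ → ℝ) (t₀ a b : ℝ) :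
    ∫ t in Set.Ioi t₀, k |t - a| * k |t - b|
      = ∫ τ in Set.Ioi (t₀ - a), k |τ| * k |(b - a) - τ| := by
  have h := (measurePreserving_sub_right volume a).setIntegral_preimage_emb
    (measurableEmbedding_subRight a) (fun τ => k |τ| * k |(b - a) - τ|) (Set.Ioi (t₀ - a))
  rw [Set.preimage_sub_const_Ioi, sub_add_cancel] at h
  simpa only [sub_sub_sub_cancel_right, abs_sub_comm b] using h

theorem integrableOn_Ioi_abs_sub_mul_abs_sub {k : ℝ → ℝ} {t₀ a b : ℝ}
    (hk : IntegrableOn (fun τ => k |τ| * k |(b - a) - τ|) (Set.Ioi (t₀ - a))) :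
    IntegrableOn (fun t => k |t - a| * k |t - b|) (Set.Ioi t₀) := by
  have h := ((measurePreserving_sub_right volume a).integrableOn_comp_preimage
    (measurableEmbedding_subRight a)).2 hk
  rw [Set.preimage_sub_const_Ioi, sub_add_cancel] at h
  simpa only [Function.comp_def, sub_sub_sub_cancel_right, abs_sub_comm b] using h

theorem stmt_9_general
    (d n : ℕ)
    (lam : ℝ)
    (kS kT : ℝ → ℝ)
    (k : (EuclideanSpace ℝ (Fin d) × ℝ) → (EuclideanSpace ℝ (Fin d) × ℝ) → ℝ)
    (hk : ∀ p q, k p q = lam * kS (‖p.1 - q.1‖) * kT (|p.2 - q.2|))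
    (pts : Fin n → EuclideanSpace ℝ (Fin d) × ℝ)
    (Δ : Matrix (Fin n) (Fin n) ℝ)
    (hPD : Δ.PosDef)
    (σ2D : (EuclideanSpace ℝ (Fin d) × ℝ) → ℝ)
    (hσ2D : ∀ p, σ2D p = lam -
      (fun i : Fin n => k p (pts i)) ⬝ᵥ Δ⁻¹ *ᵥ (fun i : Fin n => k p (pts i)))
    (σD : (EuclideanSpace ℝ (Fin d) × ℝ) → ℝ)
    (hσD : ∀ p, σD p = Real.sqrt (σ2D p))
    (convS : EuclideanSpace ℝ (Fin d) → ℝ)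
    (hconvS : ∀ v, convS v = ∫ u : EuclideanSpace ℝ (Fin d), kS ‖u‖ * kS ‖v - u‖)
    (convT : ℝ → ℝ → ℝ)
    (hconvT : ∀ a' s, convT a' s = ∫ τ in Set.Ioi a', kT |τ| * kT |s - τ|)
    (hintS : ∀ v : EuclideanSpace ℝ (Fin d),
      Integrable (fun u : EuclideanSpace ℝ (Fin d) => kS ‖u‖ * kS ‖v - u‖))
    (hintT : ∀ a' s : ℝ, IntegrableOn (fun τ => kT |τ| * kT |s - τ|) (Set.Ioi a'))
    (t0 : ℝ) (S : Set (EuclideanSpace ℝ (Fin d)))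
    (C : Matrix (Fin n) (Fin n) ℝ)
    (hC : ∀ i j, C i j =
      convS ((pts j).1 - (pts i).1) * convT (t0 - (pts i).2) ((pts j).2 - (pts i).2)) :
    (∫ x in S, ∫ t in Set.Ioi t0, (Real.sqrt lam - σD (x, t)) ^ 2)
      ≤ lam ^ 2 * (Δ⁻¹ * C).trace := by
  set g : EuclideanSpace ℝ (Fin d) → Fin n → ℝ := fun x i => kS ‖x - (pts i).1‖
  set h : ℝ → Fin n → ℝ := fun t i => kT |t - (pts i).2|
  have hA : (lam ^ 2 • Δ⁻¹).PosSemidef := hPD.inv.posSemidef.smul (sq_nonneg lam)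
  have hg : ∀ i j, Integrable (fun x => g x i * g x j) := fun i j =>
    integrable_norm_sub_mul_norm_sub (hintS _)
  have hh : ∀ i j, IntegrableOn (fun t => h t i * h t j) (Set.Ioi t0) := fun i j =>
    integrableOn_Ioi_abs_sub_mul_abs_sub (hintT _ _)
  have hC_eq : C = integralGram volume g ⊙ integralGram (volume.restrict (Set.Ioi t0)) h := by
    ext i j
    rw [hC, hconvS, hconvT, ← integral_norm_sub_mul_norm_sub, ← integral_Ioi_abs_sub_mul_abs_sub]
    rfl
  have hbound : ∀ x t,
      (√lam - σD (x, t)) ^ 2 ≤ (g x * h t) ⬝ᵥ (lam ^ 2 • Δ⁻¹) *ᵥ (g x * h t) := by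
    intro x t
    have hκ : (fun i => k (x, t) (pts i)) = lam • (g x * h t) := by
      funext i
      simp only [hk, g, h, Pi.smul_apply, Pi.mul_apply, smul_eq_mul, mul_assoc]
    have hq : (fun i => k (x, t) (pts i)) ⬝ᵥ Δ⁻¹ *ᵥ (fun i => k (x, t) (pts i))
        = (g x * h t) ⬝ᵥ (lam ^ 2 • Δ⁻¹) *ᵥ (g x * h t) := by
      rw [hκ]
      simp only [smul_mulVec, mulVec_smul, dotProduct_smul, smul_dotProduct, smul_eq_mul]
      ring
    rw [hσD, hσ2D, hq]
    exact sq_sqrt_sub_sqrt_sub_le _ (by simpa using hA.dotProduct_mulVec_nonneg (g x * h t))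
  calc (∫ x in S, ∫ t in Set.Ioi t0, (√lam - σD (x, t)) ^ 2)
      ≤ trace ((lam ^ 2 • Δ⁻¹) * C) := by
        rw [hC_eq]
        exact setIntegral_integral_le_trace_mul_integralGram hA hg hh (fun _ _ => sq_nonneg _)
          hbound S
    _ = lam ^ 2 * (Δ⁻¹ * C).trace := by rw [smul_mul, trace_smul, smul_eq_mul]

/-- Integrated bound on the squared deviation of the posterior standard deviation from the
prior standard deviation `√λ`: `∫∫ (√λ − σ_D)² ≤ λ²·Tr(Δ⁻¹C)`. -/
theorem stmt_9
    (d n : ℕ) (hd : 1 ≤ d) (hn : 1 ≤ n)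
    (lam sig : ℝ) (hlam : 0 < lam) (hsig : 0 < sig)
    (kS kT : ℝ → ℝ)
    (hkSmeas : Measurable kS) (hkTmeas : Measurable kT)
    (hkSrange : ∀ r, kS r ∈ Set.Icc (0 : ℝ) 1) (hkTrange : ∀ r, kT r ∈ Set.Icc (0 : ℝ) 1)
    (hkS0 : kS 0 = 1) (hkT0 : kT 0 = 1)
    (k : (EuclideanSpace ℝ (Fin d) × ℝ) → (EuclideanSpace ℝ (Fin d) × ℝ) → ℝ)
    (hk : ∀ p q, k p q = lam * kS (‖p.1 - q.1‖) * kT (|p.2 - q.2|))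
    (pts : Fin n → EuclideanSpace ℝ (Fin d) × ℝ)
    (Δ : Matrix (Fin n) (Fin n) ℝ)
    (hΔ : ∀ i j, Δ i j = k (pts i) (pts j) + sig ^ 2 * (if i = j then 1 else 0))
    (hPD : Δ.PosDef)
    (σ2D : (EuclideanSpace ℝ (Fin d) × ℝ) → ℝ)
    (hσ2D : ∀ p, σ2D p = lam -
      (fun i : Fin n => k p (pts i)) ⬝ᵥ Δ⁻¹ *ᵥ (fun i : Fin n => k p (pts i)))
    (hborder : ∀ p : EuclideanSpace ℝ (Fin d) × ℝ,
      (Matrix.fromBlocks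
        (Matrix.of fun (_ : Fin 1) (_ : Fin 1) => lam)
        (Matrix.of fun (_ : Fin 1) (j : Fin n) => k p (pts j))
        (Matrix.of fun (i : Fin n) (_ : Fin 1) => k p (pts i))
        Δ).PosSemidef)
    (σD : (EuclideanSpace ℝ (Fin d) × ℝ) → ℝ)
    (hσD : ∀ p, σD p = Real.sqrt (σ2D p))
    (convS : EuclideanSpace ℝ (Fin d) → ℝ)
    (hconvS : ∀ v, convS v = ∫ u : EuclideanSpace ℝ (Fin d), kS ‖u‖ * kS ‖v - u‖)
    (convT : ℝ → ℝ → ℝ)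
    (hconvT : ∀ a' s, convT a' s = ∫ τ in Set.Ioi a', kT |τ| * kT |s - τ|)
    (hintS : ∀ v : EuclideanSpace ℝ (Fin d),
      Integrable (fun u : EuclideanSpace ℝ (Fin d) => kS ‖u‖ * kS ‖v - u‖))
    (hintT : ∀ a' s : ℝ, IntegrableOn (fun τ => kT |τ| * kT |s - τ|) (Set.Ioi a'))
    (t0 : ℝ) (S : Set (EuclideanSpace ℝ (Fin d))) (hS : MeasurableSet S)
    (C : Matrix (Fin n) (Fin n) ℝ)
    (hC : ∀ i j, C i j =
      convS ((pts j).1 - (pts i).1) * convT (t0 - (pts i).2) ((pts j).2 - (pts i).2)) :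
    (∫ x in S, ∫ t in Set.Ioi t0, (Real.sqrt lam - σD (x, t)) ^ 2)
      ≤ lam ^ 2 * (Δ⁻¹ * C).trace :=
  stmt_9_general d n lam kS kT k hk pts Δ hPD σ2D hσ2D σD hσD convS hconvS convT hconvT hintS hintT
    t0 S C hC
end

section
/- (Theorem 1, second bound.) The squared 2-Wasserstein distance between the posterior conditioned on the full dataset and the prior, integrated over the domain of future predictions, is bounded as ∫_S ∫_{t₀}^{+∞} [μ_D(x,t)² + (√λ − σ_D(x,t))²] dt dx ≤ λ²·(yᵀΔ⁻¹ C Δ⁻¹ y + Tr(Δ⁻¹ C)), where C is the n×n matrix with entries C_{ij} = (k_S⋆k_S)(x_j − x_i)·(k_T⋆k_T)_{t₀−t_i}^{+∞}(t_j − t_i). -/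
open Matrix MeasureTheory

/-!
Write `κ = κ(x,t)` and `b = Δ⁻¹y`. Then `μ_D = κᵀb`, and since `0 ≤ σ_D ≤ √λ` (the Schur
complement of `Δ` in the bordered matrix is `σ_D²`), `(√λ - σ_D)² ≤ λ - σ_D² = κᵀΔ⁻¹κ`. Hence the
integrand is at most `∑ᵢⱼ (bᵢbⱼ + (Δ⁻¹)ᵢⱼ) κᵢκⱼ`, and `κᵢκⱼ = λ² (k_S k_S)(x) (k_T k_T)(t)` splits
into a spatial and a temporal factor, which the translations `u = x - xᵢ`, `τ = t - tᵢ` integrate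
to the two convolutions in `Cᵢⱼ`. The dominating function has nonnegative `t`-integral, so `S`
may be enlarged to all of `ℝᵈ`.
-/

lemma sq_sqrt_sub_sqrt_le {a c : ℝ} (hc : 0 ≤ c) (hca : c ≤ a) : (√a - √c) ^ 2 ≤ a - c := by
  nlinarith [Real.sq_sqrt hc, Real.sq_sqrt (hc.trans hca), Real.sqrt_nonneg c,
    Real.sqrt_le_sqrt hca]

namespace Matrix

variable {ι R : Type*} [Fintype ι] [CommRing R]

lemma sq_dotProduct_add_dotProduct_mulVec (M : Matrix ι ι R) (b v : ι → R) :
    (v ⬝ᵥ b) ^ 2 + v ⬝ᵥ M *ᵥ v = ∑ p : ι × ι, (b p.1 * b p.2 + M p.1 p.2) * (v p.1 * v p.2) := by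
  rw [sq, dotProduct, Finset.sum_mul_sum, Fintype.sum_prod_type]
  simp only [dotProduct, mulVec, Finset.mul_sum, ← Finset.sum_add_distrib]
  exact Finset.sum_congr rfl fun _ _ => Finset.sum_congr rfl fun _ _ => by ring

lemma IsSymm.dotProduct_mul_mul_mulVec_add_trace {M : Matrix ι ι R} (hM : M.IsSymm)
    (C : Matrix ι ι R) (y : ι → R) :
    y ⬝ᵥ (M * C * M) *ᵥ y + (M * C).trace =
      ∑ p : ι × ι, ((M *ᵥ y) p.1 * (M *ᵥ y) p.2 + M p.1 p.2) * C p.1 p.2 := by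
  have hy : y ᵥ* M = M *ᵥ y := by rw [← vecMul_transpose, hM.eq]
  rw [← mulVec_mulVec, ← mulVec_mulVec, dotProduct_mulVec, hy, trace_mul_comm,
    Fintype.sum_prod_type]
  generalize M *ᵥ y = b
  simp only [trace, diag, mul_apply, dotProduct, mulVec, Finset.mul_sum,
    ← Finset.sum_add_distrib]
  refine Finset.sum_congr rfl fun i _ => Finset.sum_congr rfl fun j _ => ?_
  rw [hM.apply i j]
  ring

lemma dotProduct_inv_mulVec_le_of_posSemidef_fromBlocks [DecidableEq ι] {D : Matrix ι ι ℝ}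
    (hD : D.PosDef) {c : ℝ} {v : ι → ℝ}
    (h : (fromBlocks (of fun (_ : Fin 1) (_ : Fin 1) => c) (of fun _ j => v j)
      (of fun i _ => v i) D).PosSemidef) :
    v ⬝ᵥ D⁻¹ *ᵥ v ≤ c := by
  let _ := hD.isUnit.invertible
  have hB : (of fun i (_ : Fin 1) => v i) = (of fun (_ : Fin 1) j => v j)ᴴ := by ext; simp
  rw [hB, hD.fromBlocks₂₂] at h
  have := h.diag_nonneg (i := 0)
  rw [dotProduct_mulVec]
  simpa [mul_apply, dotProduct, vecMul] using this

lemma sq_dotProduct_add_sq_sqrt_sub_sqrt_le_sum [DecidableEq ι] {D : Matrix ι ι ℝ}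
    (hD : D.PosDef) {c : ℝ} (v y : ι → ℝ)
    (h : (fromBlocks (of fun (_ : Fin 1) (_ : Fin 1) => c) (of fun _ j => v j)
      (of fun i _ => v i) D).PosSemidef) :
    (v ⬝ᵥ D⁻¹ *ᵥ y) ^ 2 + (√c - √(c - v ⬝ᵥ D⁻¹ *ᵥ v)) ^ 2 ≤
      ∑ p : ι × ι, ((D⁻¹ *ᵥ y) p.1 * (D⁻¹ *ᵥ y) p.2 + D⁻¹ p.1 p.2) * (v p.1 * v p.2) := by
  have hq_nonneg : 0 ≤ v ⬝ᵥ D⁻¹ *ᵥ v := by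
    simpa using hD.inv.posSemidef.dotProduct_mulVec_nonneg v
  have hq_le := dotProduct_inv_mulVec_le_of_posSemidef_fromBlocks hD h
  have hsqrt := sq_sqrt_sub_sqrt_le (sub_nonneg.2 hq_le) (sub_le_self c hq_nonneg)
  rw [sub_sub_cancel] at hsqrt
  rw [← sq_dotProduct_add_dotProduct_mulVec]
  exact add_le_add_right hsqrt _

end Matrix

lemma norm_sub_mul_norm_sub_comp_add_right {E : Type*} [NormedAddCommGroup E] (g : ℝ → ℝ)
    (a b : E) :
    (fun x => g ‖x - a‖ * g ‖x - b‖) ∘ (· + a) = fun u => g ‖u‖ * g ‖(b - a) - u‖ := by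
  ext u
  simp only [Function.comp_apply, add_sub_cancel_right]
  rw [← norm_neg (u + a - b)]
  congr 3
  abel

section Translation

variable {E : Type*} [NormedAddCommGroup E] [MeasurableSpace E] [MeasurableAdd E]
  (μ : Measure E) [μ.IsAddRightInvariant] (g : ℝ → ℝ) (s : Set E) (a b : E)

lemma integrableOn_norm_sub_mul_norm_sub_iff :
    IntegrableOn (fun x => g ‖x - a‖ * g ‖x - b‖) s μ ↔
      IntegrableOn (fun u => g ‖u‖ * g ‖(b - a) - u‖) ((· + a) ⁻¹' s) μ := by
  rw [← norm_sub_mul_norm_sub_comp_add_right,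
    (measurePreserving_add_right μ a).integrableOn_comp_preimage (measurableEmbedding_addRight a)]

lemma setIntegral_norm_sub_mul_norm_sub :
    ∫ x in s, g ‖x - a‖ * g ‖x - b‖ ∂μ =
      ∫ u in (· + a) ⁻¹' s, g ‖u‖ * g ‖(b - a) - u‖ ∂μ := by
  rw [← (measurePreserving_add_right μ a).setIntegral_preimage_emb
    (measurableEmbedding_addRight a), ← norm_sub_mul_norm_sub_comp_add_right]
  rfl

end Translation

lemma setIntegral_integral_le_sum_mul {ι α β : Type*} [Fintype ι] [MeasurableSpace α]
    [MeasurableSpace β] {μ : Measure α} {ν : Measure β} {f : α → β → ℝ}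
    (c : ι → ℝ) (A : ι → α → ℝ) (B : ι → β → ℝ) (hf : ∀ x y, 0 ≤ f x y)
    (hfAB : ∀ x y, f x y ≤ ∑ i, c i * A i x * B i y)
    (hA : ∀ i, Integrable (A i) μ) (hB : ∀ i, Integrable (B i) ν) (S : Set α) :
    ∫ x in S, ∫ y, f x y ∂ν ∂μ ≤ ∑ i, c i * ((∫ x, A i x ∂μ) * ∫ y, B i y ∂ν) := by
  have hAB x : Integrable (fun y => ∑ i, c i * A i x * B i y) ν :=
    integrable_finsetSum _ fun i _ => (hB i).const_mul _
  have hinner x : ∫ y, ∑ i, c i * A i x * B i y ∂ν = ∑ i, c i * A i x * ∫ y, B i y ∂ν := by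
    rw [integral_finsetSum _ fun i _ => (hB i).const_mul _]
    simp only [integral_const_mul]
  have hle x : ∫ y, f x y ∂ν ≤ ∑ i, c i * A i x * ∫ y, B i y ∂ν :=
    hinner x ▸ integral_mono_of_nonneg (.of_forall (hf x)) (hAB x) (.of_forall (hfAB x))
  have hnonneg x : 0 ≤ ∑ i, c i * A i x * ∫ y, B i y ∂ν :=
    (integral_nonneg (hf x)).trans (hle x)
  have hH : Integrable (fun x => ∑ i, c i * A i x * ∫ y, B i y ∂ν) μ :=
    integrable_finsetSum _ fun i _ => ((hA i).const_mul _).mul_const _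
  calc ∫ x in S, ∫ y, f x y ∂ν ∂μ
      ≤ ∫ x in S, ∑ i, c i * A i x * ∫ y, B i y ∂ν ∂μ :=
        integral_mono_of_nonneg (.of_forall fun x => integral_nonneg (hf x)) hH.integrableOn
          (.of_forall hle)
    _ ≤ ∫ x, ∑ i, c i * A i x * ∫ y, B i y ∂ν ∂μ :=
        setIntegral_le_integral hH (.of_forall hnonneg)
    _ = ∑ i, c i * ((∫ x, A i x ∂μ) * ∫ y, B i y ∂ν) := by
        rw [integral_finsetSum _ fun i _ => ((hA i).const_mul _).mul_const _]
        simp only [integral_mul_const, integral_const_mul, mul_assoc]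

theorem stmt_11_general
    (d n : ℕ)
    (lam : ℝ)
    (kS kT : ℝ → ℝ)
    (k : (EuclideanSpace ℝ (Fin d) × ℝ) → (EuclideanSpace ℝ (Fin d) × ℝ) → ℝ)
    (hk : ∀ p q, k p q = lam * kS (‖p.1 - q.1‖) * kT (|p.2 - q.2|))
    (pts : Fin n → EuclideanSpace ℝ (Fin d) × ℝ)
    (y : Fin n → ℝ)
    (Δ : Matrix (Fin n) (Fin n) ℝ)
    (hPD : Δ.PosDef)
    (μD : (EuclideanSpace ℝ (Fin d) × ℝ) → ℝ)
    (hμD : ∀ p, μD p = (fun i : Fin n => k p (pts i)) ⬝ᵥ Δ⁻¹ *ᵥ y)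
    (σ2D : (EuclideanSpace ℝ (Fin d) × ℝ) → ℝ)
    (hσ2D : ∀ p, σ2D p = lam -
      (fun i : Fin n => k p (pts i)) ⬝ᵥ Δ⁻¹ *ᵥ (fun i : Fin n => k p (pts i)))
    (hborder : ∀ p : EuclideanSpace ℝ (Fin d) × ℝ,
      (Matrix.fromBlocks
        (Matrix.of fun (_ : Fin 1) (_ : Fin 1) => lam)
        (Matrix.of fun (_ : Fin 1) (j : Fin n) => k p (pts j))
        (Matrix.of fun (i : Fin n) (_ : Fin 1) => k p (pts i))
        Δ).PosSemidef)
    (σD : (EuclideanSpace ℝ (Fin d) × ℝ) → ℝ)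
    (hσD : ∀ p, σD p = Real.sqrt (σ2D p))
    (convS : EuclideanSpace ℝ (Fin d) → ℝ)
    (hconvS : ∀ v, convS v = ∫ u : EuclideanSpace ℝ (Fin d), kS ‖u‖ * kS ‖v - u‖)
    (convT : ℝ → ℝ → ℝ)
    (hconvT : ∀ a' s, convT a' s = ∫ τ in Set.Ioi a', kT |τ| * kT |s - τ|)
    (hintS : ∀ v : EuclideanSpace ℝ (Fin d),
      Integrable (fun u : EuclideanSpace ℝ (Fin d) => kS ‖u‖ * kS ‖v - u‖))
    (hintT : ∀ a' s : ℝ, IntegrableOn (fun τ => kT |τ| * kT |s - τ|) (Set.Ioi a'))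
    (t0 : ℝ) (S : Set (EuclideanSpace ℝ (Fin d)))
    (C : Matrix (Fin n) (Fin n) ℝ)
    (hC : ∀ i j, C i j =
      convS ((pts j).1 - (pts i).1) * convT (t0 - (pts i).2) ((pts j).2 - (pts i).2)) :
    (∫ x in S, ∫ t in Set.Ioi t0,
        ((μD (x, t)) ^ 2 + (Real.sqrt lam - σD (x, t)) ^ 2))
      ≤ lam ^ 2 * ((y ⬝ᵥ (Δ⁻¹ * C * Δ⁻¹) *ᵥ y) + (Δ⁻¹ * C).trace) := by
  set b := Δ⁻¹ *ᵥ y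
  set A : Fin n × Fin n → EuclideanSpace ℝ (Fin d) → ℝ :=
    fun p x => kS ‖x - (pts p.1).1‖ * kS ‖x - (pts p.2).1‖
  set B : Fin n × Fin n → ℝ → ℝ := fun p t => kT ‖t - (pts p.1).2‖ * kT ‖t - (pts p.2).2‖
  have hA p : Integrable (A p) := by
    simpa using (integrableOn_norm_sub_mul_norm_sub_iff volume kS Set.univ _ _).2
      (hintS ((pts p.2).1 - (pts p.1).1)).integrableOn
  have hB p : IntegrableOn (B p) (Set.Ioi t0) := by
    refine (integrableOn_norm_sub_mul_norm_sub_iff volume kT _ _ _).2 ?_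
    simpa [Set.preimage_add_const_Ioi] using hintT (t0 - (pts p.1).2) ((pts p.2).2 - (pts p.1).2)
  have hAB p : (∫ x, A p x) * (∫ t in Set.Ioi t0, B p t) = C p.1 p.2 := by
    rw [hC, hconvS, hconvT, ← setIntegral_univ, setIntegral_norm_sub_mul_norm_sub,
      setIntegral_norm_sub_mul_norm_sub, Set.preimage_add_const_Ioi]
    simp
  have hle x t : μD (x, t) ^ 2 + (√lam - σD (x, t)) ^ 2 ≤
      ∑ p, (b p.1 * b p.2 + Δ⁻¹ p.1 p.2) * lam ^ 2 * A p x * B p t := by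
    rw [hμD, hσD, hσ2D]
    refine (sq_dotProduct_add_sq_sqrt_sub_sqrt_le_sum hPD _ y (hborder (x, t))).trans_eq ?_
    refine Finset.sum_congr rfl fun p _ => ?_
    simp only [A, B, hk, Real.norm_eq_abs]
    ring
  calc _ ≤ ∑ p, (b p.1 * b p.2 + Δ⁻¹ p.1 p.2) * lam ^ 2 *
        ((∫ x, A p x) * ∫ t in Set.Ioi t0, B p t) :=
        setIntegral_integral_le_sum_mul _ A B (fun _ _ => by positivity) hle hA hB S
    _ = lam ^ 2 * ∑ p : Fin n × Fin n, (b p.1 * b p.2 + Δ⁻¹ p.1 p.2) * C p.1 p.2 := by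
        simp only [hAB, Finset.mul_sum]
        exact Finset.sum_congr rfl fun _ _ => by ring
    _ = _ := by
        rw [(isHermitian_iff_isSymm.mp hPD.inv.isHermitian).dotProduct_mul_mul_mulVec_add_trace]

/-- Theorem 1, second bound: the squared 2-Wasserstein distance between the posterior
conditioned on the full dataset and the prior, integrated over the domain of future
predictions, is bounded by `λ²(yᵀΔ⁻¹CΔ⁻¹y + Tr(Δ⁻¹C))`. -/
theorem stmt_11
    (d n : ℕ) (hd : 1 ≤ d) (hn : 1 ≤ n)
    (lam sig : ℝ) (hlam : 0 < lam) (hsig : 0 < sig)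
    (kS kT : ℝ → ℝ)
    (hkSmeas : Measurable kS) (hkTmeas : Measurable kT)
    (hkSrange : ∀ r, kS r ∈ Set.Icc (0 : ℝ) 1) (hkTrange : ∀ r, kT r ∈ Set.Icc (0 : ℝ) 1)
    (hkS0 : kS 0 = 1) (hkT0 : kT 0 = 1)
    (k : (EuclideanSpace ℝ (Fin d) × ℝ) → (EuclideanSpace ℝ (Fin d) × ℝ) → ℝ)
    (hk : ∀ p q, k p q = lam * kS (‖p.1 - q.1‖) * kT (|p.2 - q.2|))
    (pts : Fin n → EuclideanSpace ℝ (Fin d) × ℝ)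
    (y : Fin n → ℝ)
    (Δ : Matrix (Fin n) (Fin n) ℝ)
    (hΔ : ∀ i j, Δ i j = k (pts i) (pts j) + sig ^ 2 * (if i = j then 1 else 0))
    (hPD : Δ.PosDef)
    (μD : (EuclideanSpace ℝ (Fin d) × ℝ) → ℝ)
    (hμD : ∀ p, μD p = (fun i : Fin n => k p (pts i)) ⬝ᵥ Δ⁻¹ *ᵥ y)
    (σ2D : (EuclideanSpace ℝ (Fin d) × ℝ) → ℝ)
    (hσ2D : ∀ p, σ2D p = lam -
      (fun i : Fin n => k p (pts i)) ⬝ᵥ Δ⁻¹ *ᵥ (fun i : Fin n => k p (pts i)))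
    (hborder : ∀ p : EuclideanSpace ℝ (Fin d) × ℝ,
      (Matrix.fromBlocks
        (Matrix.of fun (_ : Fin 1) (_ : Fin 1) => lam)
        (Matrix.of fun (_ : Fin 1) (j : Fin n) => k p (pts j))
        (Matrix.of fun (i : Fin n) (_ : Fin 1) => k p (pts i))
        Δ).PosSemidef)
    (σD : (EuclideanSpace ℝ (Fin d) × ℝ) → ℝ)
    (hσD : ∀ p, σD p = Real.sqrt (σ2D p))
    (convS : EuclideanSpace ℝ (Fin d) → ℝ)
    (hconvS : ∀ v, convS v = ∫ u : EuclideanSpace ℝ (Fin d), kS ‖u‖ * kS ‖v - u‖)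
    (convT : ℝ → ℝ → ℝ)
    (hconvT : ∀ a' s, convT a' s = ∫ τ in Set.Ioi a', kT |τ| * kT |s - τ|)
    (hintS : ∀ v : EuclideanSpace ℝ (Fin d),
      Integrable (fun u : EuclideanSpace ℝ (Fin d) => kS ‖u‖ * kS ‖v - u‖))
    (hintT : ∀ a' s : ℝ, IntegrableOn (fun τ => kT |τ| * kT |s - τ|) (Set.Ioi a'))
    (t0 : ℝ) (S : Set (EuclideanSpace ℝ (Fin d))) (hS : MeasurableSet S)
    (C : Matrix (Fin n) (Fin n) ℝ)
    (hC : ∀ i j, C i j =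
      convS ((pts j).1 - (pts i).1) * convT (t0 - (pts i).2) ((pts j).2 - (pts i).2)) :
    (∫ x in S, ∫ t in Set.Ioi t0,
        ((μD (x, t)) ^ 2 + (Real.sqrt lam - σD (x, t)) ^ 2))
      ≤ lam ^ 2 * ((y ⬝ᵥ (Δ⁻¹ * C * Δ⁻¹) *ᵥ y) + (Δ⁻¹ * C).trace) :=
  stmt_11_general d n lam kS kT k hk pts y Δ hPD μD hμD σ2D hσ2D hborder σD hσD convS hconvS convT
    hconvT hintS hintT t0 S C hC
end

section
/- (Restricted self-convolution of the half-integer Matérn temporal kernel.) Let p ∈ ℕ, l > 0, and define k_T(t) = exp(−√(2p+1)·t/l)·(p!/(2p)!)·Σ_{k=0}^{p} ((p+k)!/(k!·(p−k)!))·(2√(2p+1)·t/l)^{p−k} for t ≥ 0. Let t₀, t_i, t_j ∈ ℝ with t₀ ≥ t_i and t₀ ≥ t_j. For 0 ≤ k₁, k₂ ≤ p define the polynomial P(t) = t^{p−k₁}·(t − t_j + t_i)^{p−k₂}, the constant C_{k₁k₂} = (p!/(2p)!)²·((p+k₁)!·(p+k₂)!)/(k₁!·k₂!·(p−k₁)!·(p−k₂)!)·(2√(2p+1)/l)^{2p−k₁−k₂−1},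 and P_{k₁k₂}(t₀, t_i, t_j) = Σ_{k₃=0}^{2p−k₁−k₂} (l/(2√(2p+1)))^{k₃}·P^{(k₃)}(t₀ − t_i), where P^{(k)} denotes the k-th derivative of P. Then ∫_{t₀−t_i}^{+∞} k_T(t)·k_T(t + t_i − t_j) dt = Σ_{k₁=0}^{p} Σ_{k₂=0}^{p} C_{k₁k₂}·exp(−√(2p+1)·(2t₀ − t_i − t_j)/l)·P_{k₁k₂}(t₀, t_i, t_j). -/
/-!
On `(t0 - ti, ∞)` both arguments of `kT` are nonnegative, so the integrand is a product of two
copies of the Matérn formula. Expanding it, every term is a constant times `P(t) e^{-bt}` with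
`b = 2√(2p+1)/l` and `P(t) = t^(p-k1) (t + ti - tj)^(p-k2)`. For a polynomial `P` of degree at most
`n`, the function `-b⁻¹ Q(t) e^{-bt}` with `Q = ∑_{k ≤ n} b^(-k) P^(k)` is an antiderivative of
`P(t) e^{-bt}` (because `Q - b⁻¹ Q' = P` telescopes) and vanishes at infinity, whence
`∫_a^∞ P(t) e^{-bt} dt = b⁻¹ e^{-ba} ∑_{k ≤ n} b^(-k) P^(k)(a)`.
-/

open MeasureTheory Polynomial Filter Real Set Topology

namespace Polynomial

theorem tendsto_eval_mul_exp_neg_mul_atTop (P : ℝ[X]) {b : ℝ} (hb : 0 < b) :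
    Tendsto (fun t => P.eval t * exp (-(b * t))) atTop (𝓝 0) := by
  refine ((P.comp (C b⁻¹ * X)).tendsto_div_exp_atTop.comp
    (tendsto_id.const_mul_atTop hb)).congr fun t => ?_
  simp [exp_neg, div_eq_mul_inv, hb.ne']

theorem integrableOn_eval_mul_exp_neg_mul_Ioi (P : ℝ[X]) {b : ℝ} (hb : 0 < b) (a : ℝ) :
    IntegrableOn (fun t => P.eval t * exp (-(b * t))) (Ioi a) := by
  refine integrable_of_isBigO_exp_neg (half_pos hb) (by fun_prop) ?_
  -- `P(t) e^{-bt} = (P(t) e^{-bt/2}) e^{-bt/2}` and the first factor tends to `0`.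
  have hbounded := (P.tendsto_eval_mul_exp_neg_mul_atTop (half_pos hb)).isBigO_one ℝ
  refine ((hbounded.mul (Asymptotics.isBigO_refl (fun t => exp (-(b / 2) * t)) atTop)).congr
    (fun t => ?_) (fun t => ?_))
  · rw [mul_assoc, ← exp_add]; ring_nf
  · rw [one_mul]

theorem sum_iterate_derivative_sub_C_mul_derivative {R : Type*} [CommRing R] (P : R[X]) (c : R)
    {n : ℕ} (hn : P.natDegree ≤ n) :
    let Q := ∑ k ∈ Finset.range (n + 1), C (c ^ k) * derivative^[k] P
    Q - C c * derivative Q = P := by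
  intro Q
  have hvanish : derivative^[n + 1] P = 0 := iterate_derivative_eq_zero (Nat.lt_succ_of_le hn)
  have hshift : C c * derivative Q =
      ∑ k ∈ Finset.range (n + 1), C (c ^ (k + 1)) * derivative^[k + 1] P := by
    simp only [Q, derivative_sum, derivative_C_mul, Finset.mul_sum, Function.iterate_succ_apply',
      pow_succ, C_mul]
    exact Finset.sum_congr rfl fun k _ => by ring
  rw [hshift, ← Finset.sum_sub_distrib,
    Finset.sum_range_sub' (fun k => C (c ^ k) * derivative^[k] P), hvanish]
  simp

theorem integral_Ioi_eval_mul_exp_neg_mul (P : ℝ[X]) {b : ℝ} (hb : 0 < b) (a : ℝ) {n : ℕ}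
    (hn : P.natDegree ≤ n) :
    ∫ t in Ioi a, P.eval t * exp (-(b * t)) =
      b⁻¹ * exp (-(b * a)) *
        ∑ k ∈ Finset.range (n + 1), b⁻¹ ^ k * (derivative^[k] P).eval a := by
  set Q := ∑ k ∈ Finset.range (n + 1), C (b⁻¹ ^ k) * derivative^[k] P with hQ
  have hQP : Q - C b⁻¹ * derivative Q = P := sum_iterate_derivative_sub_C_mul_derivative P b⁻¹ hn
  have hderiv : ∀ t ∈ Ici a, HasDerivAt (fun t => -(b⁻¹ * (Q.eval t * exp (-(b * t)))))
      (P.eval t * exp (-(b * t))) t := by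
    intro t _
    have hexp : HasDerivAt (fun t => exp (-(b * t))) (exp (-(b * t)) * -b) t := by
      simpa using ((hasDerivAt_id t).const_mul b).neg.exp
    refine (((Q.hasDerivAt t).mul hexp).const_mul b⁻¹).neg.congr_deriv ?_
    rw [← hQP, eval_sub, eval_mul, eval_C]
    field_simp
    ring
  have hlim : Tendsto (fun t => -(b⁻¹ * (Q.eval t * exp (-(b * t))))) atTop (𝓝 0) := by
    simpa using ((Q.tendsto_eval_mul_exp_neg_mul_atTop hb).const_mul b⁻¹).neg
  rw [integral_Ioi_of_hasDerivAt_of_tendsto' hderiv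
    (P.integrableOn_eval_mul_exp_neg_mul_Ioi hb a) hlim]
  simp only [hQ, eval_finsetSum, eval_mul, eval_C]
  ring

end Polynomial

open Finset in
/-- The formula for `t ≥ 0`, taken on all of `ℝ`: not the even extension `t ↦ k(|t|)`. -/
noncomputable def maternKernel (p : ℕ) (l t : ℝ) : ℝ :=
  exp (-(√(2 * (p : ℝ) + 1) * t / l)) * ((p.factorial : ℝ) / ((2 * p).factorial : ℝ)) *
    ∑ k ∈ range (p + 1), (((p + k).factorial : ℝ) / ((k.factorial : ℝ) * ((p - k).factorial : ℝ))) *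
      (2 * √(2 * (p : ℝ) + 1) * t / l) ^ (p - k)

open Finset in
theorem maternKernel_mul_maternKernel_add (p : ℕ) (l t d : ℝ) :
    maternKernel p l t * maternKernel p l (t + d) =
      ∑ k1 ∈ range (p + 1), ∑ k2 ∈ range (p + 1),
        ((p.factorial : ℝ) / ((2 * p).factorial : ℝ)) ^ 2 *
          ((((p + k1).factorial : ℝ) * ((p + k2).factorial : ℝ)) /
            ((k1.factorial : ℝ) * (k2.factorial : ℝ) *
              ((p - k1).factorial : ℝ) * ((p - k2).factorial : ℝ))) *
          (2 * √(2 * (p : ℝ) + 1) / l) ^ (p - k1) * (2 * √(2 * (p : ℝ) + 1) / l) ^ (p - k2) *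
          exp (-(√(2 * (p : ℝ) + 1) * d / l)) *
          ((X ^ (p - k1) * (X + C d) ^ (p - k2) : ℝ[X]).eval t *
            exp (-(2 * √(2 * (p : ℝ) + 1) / l * t))) := by
  simp only [maternKernel]
  set s := √(2 * (p : ℝ) + 1)
  have hexp : exp (-(s * t / l)) * exp (-(s * (t + d) / l)) =
      exp (-(s * d / l)) * exp (-(2 * s / l * t)) := by
    rw [← exp_add, ← exp_add]
    ring_nf
  have hregroup : ∀ e₁ e₂ A S₁ S₂ : ℝ, e₁ * A * S₁ * (e₂ * A * S₂) = e₁ * e₂ * A ^ 2 * (S₁ * S₂) :=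
    fun _ _ _ _ _ => by ring
  rw [hregroup, hexp, sum_mul_sum, mul_sum]
  refine sum_congr rfl fun k1 _ => ?_
  rw [mul_sum]
  refine sum_congr rfl fun k2 _ => ?_
  simp only [eval_mul, eval_pow, eval_add, eval_X, eval_C]
  rw [show 2 * s * t / l = 2 * s / l * t by ring, show 2 * s * (t + d) / l = 2 * s / l * (t + d) by ring,
    mul_pow, mul_pow]
  ring

theorem integral_Ioi_maternKernel_product_term {p k1 k2 : ℕ} (hk1 : k1 ≤ p) (hk2 : k2 ≤ p) {s l : ℝ}
    (hs : 0 < s) (hl : 0 < l) (K a d : ℝ) :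
    ∫ t in Ioi a, K * (2 * s / l) ^ (p - k1) * (2 * s / l) ^ (p - k2) * exp (-(s * d / l)) *
        ((X ^ (p - k1) * (X + C d) ^ (p - k2) : ℝ[X]).eval t * exp (-(2 * s / l * t))) =
      K * (2 * s / l) ^ (2 * (p : ℤ) - (k1 : ℤ) - (k2 : ℤ) - 1) * exp (-(s * (2 * a + d) / l)) *
        ∑ k3 ∈ Finset.range (2 * p - k1 - k2 + 1),
          (l / (2 * s)) ^ k3 * (derivative^[k3] (X ^ (p - k1) * (X + C d) ^ (p - k2))).eval a := by
  have hb : 0 < 2 * s / l := by positivity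
  have hdeg : (X ^ (p - k1) * (X + C d) ^ (p - k2) : ℝ[X]).natDegree ≤ 2 * p - k1 - k2 := by
    refine natDegree_mul_le.trans ?_
    rw [natDegree_X_pow, natDegree_pow, natDegree_X_add_C]
    omega
  have hpow : (2 * s / l) ^ (p - k1) * (2 * s / l) ^ (p - k2) * (2 * s / l)⁻¹ =
      (2 * s / l) ^ (2 * (p : ℤ) - (k1 : ℤ) - (k2 : ℤ) - 1) := by
    rw [← pow_add, ← zpow_natCast, ← zpow_neg_one, ← zpow_add₀ hb.ne']
    congr 1
    omega
  have hexp : exp (-(s * d / l)) * exp (-(2 * s / l * a)) = exp (-(s * (2 * a + d) / l)) := by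
    rw [← exp_add]
    ring_nf
  rw [integral_const_mul, integral_Ioi_eval_mul_exp_neg_mul _ hb a hdeg, inv_div, ← hexp, ← hpow,
    inv_div]
  ring

open Finset in
theorem integral_Ioi_maternKernel_mul_maternKernel_add (p : ℕ) {l : ℝ} (hl : 0 < l) (a d : ℝ) :
    ∫ t in Ioi a, maternKernel p l t * maternKernel p l (t + d) =
      ∑ k1 ∈ range (p + 1), ∑ k2 ∈ range (p + 1),
        (((p.factorial : ℝ) / ((2 * p).factorial : ℝ)) ^ 2 *
            ((((p + k1).factorial : ℝ) * ((p + k2).factorial : ℝ)) /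
              ((k1.factorial : ℝ) * (k2.factorial : ℝ) *
                ((p - k1).factorial : ℝ) * ((p - k2).factorial : ℝ))) *
            (2 * √(2 * (p : ℝ) + 1) / l) ^ (2 * (p : ℤ) - (k1 : ℤ) - (k2 : ℤ) - 1)) *
          exp (-(√(2 * (p : ℝ) + 1) * (2 * a + d) / l)) *
          ∑ k3 ∈ range (2 * p - k1 - k2 + 1), (l / (2 * √(2 * (p : ℝ) + 1))) ^ k3 *
            (derivative^[k3] (X ^ (p - k1) * (X + C d) ^ (p - k2))).eval a := by
  have hs : 0 < √(2 * (p : ℝ) + 1) := by positivity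
  have hb : 0 < 2 * √(2 * (p : ℝ) + 1) / l := by positivity
  simp only [maternKernel_mul_maternKernel_add]
  rw [integral_finsetSum _ fun k1 _ => integrable_finsetSum _ fun k2 _ =>
    ((X ^ (p - k1) * (X + C d) ^ (p - k2)).integrableOn_eval_mul_exp_neg_mul_Ioi hb a).const_mul _]
  refine sum_congr rfl fun k1 hk1 => ?_
  rw [integral_finsetSum _ fun k2 _ =>
    ((X ^ (p - k1) * (X + C d) ^ (p - k2)).integrableOn_eval_mul_exp_neg_mul_Ioi hb a).const_mul _]
  refine sum_congr rfl fun k2 hk2 => ?_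
  exact integral_Ioi_maternKernel_product_term (Nat.le_of_lt_succ (mem_range.mp hk1))
    (Nat.le_of_lt_succ (mem_range.mp hk2)) hs hl _ a d

/-- Restricted self-convolution of the half-integer Matérn temporal kernel
(Lemma 8 of the paper). -/
theorem stmt_14 (p : ℕ) (l : ℝ) (hl : 0 < l)
    (kT : ℝ → ℝ)
    (hkT : ∀ t : ℝ, 0 ≤ t → kT t =
      Real.exp (-(Real.sqrt (2 * (p : ℝ) + 1) * t / l)) *
        ((p.factorial : ℝ) / ((2 * p).factorial : ℝ)) *
        ∑ k ∈ Finset.range (p + 1),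
          (((p + k).factorial : ℝ) / ((k.factorial : ℝ) * ((p - k).factorial : ℝ))) *
            (2 * Real.sqrt (2 * (p : ℝ) + 1) * t / l) ^ (p - k))
    (t0 ti tj : ℝ) (h0i : ti ≤ t0) (h0j : tj ≤ t0) :
    (∫ t in Set.Ioi (t0 - ti), kT t * kT (t + ti - tj))
      = ∑ k1 ∈ Finset.range (p + 1), ∑ k2 ∈ Finset.range (p + 1),
          (((p.factorial : ℝ) / ((2 * p).factorial : ℝ)) ^ 2 *
              ((((p + k1).factorial : ℝ) * ((p + k2).factorial : ℝ)) /
                ((k1.factorial : ℝ) * (k2.factorial : ℝ) *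
                  ((p - k1).factorial : ℝ) * ((p - k2).factorial : ℝ))) *
              (2 * Real.sqrt (2 * (p : ℝ) + 1) / l) ^
                (2 * (p : ℤ) - (k1 : ℤ) - (k2 : ℤ) - 1)) *
            Real.exp (-(Real.sqrt (2 * (p : ℝ) + 1) * (2 * t0 - ti - tj) / l)) *
            (∑ k3 ∈ Finset.range (2 * p - k1 - k2 + 1),
              (l / (2 * Real.sqrt (2 * (p : ℝ) + 1))) ^ k3 *
                (derivative^[k3]
                  ((X : ℝ[X]) ^ (p - k1) * ((X : ℝ[X]) + C (ti - tj)) ^ (p - k2))).eval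
                  (t0 - ti)) := by
  have hkernel : EqOn (fun t => kT t * kT (t + ti - tj))
      (fun t => maternKernel p l t * maternKernel p l (t + (ti - tj))) (Ioi (t0 - ti)) := by
    intro t (ht : t0 - ti < t)
    simp only [← add_sub_assoc]
    rw [hkT t (by linarith), hkT _ (by linarith)]
    rfl
  rw [setIntegral_congr_fun measurableSet_Ioi hkernel,
    integral_Ioi_maternKernel_mul_maternKernel_add p hl,
    show 2 * (t0 - ti) + (ti - tj) = 2 * t0 - ti - tj by ring]
end
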